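/- arXiv:2510.24959 — 4 statements merged into one kernel-verified Lean document; each statement's English description precedes it below -/
import Mathlib

section
/- For all integers k ≥ 2 and n ≥ 2, the k-move deduction number of the path P_n on n vertices equals ⌈n/(k+1)⌉. -/
namespace Deduction

variable {V : Type*}

/-- The number of times searcher `i` has moved before stage `s`. -/
noncomputable def movesBefore {d : ℕ} (t : ℕ → Fin d → V) (i : Fin d) (s : ℕ) : ℕ :=
  Set.ncard {s' : ℕ | s' < s ∧ t (s' + 1) i ≠ t s' i}

/-- The set of vertices protected by stage `s`: those occupied by some searcher
at some stage `s' ≤ s`. -/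
def protectedSet {d : ℕ} (t : ℕ → Fin d → V) (s : ℕ) : Set V :=
  {v | ∃ i : Fin d, ∃ s' ≤ s, t s' i = v}

/-- The unprotected neighbours of `v` at stage `s`. -/
def unprotNbrs (G : SimpleGraph V) {d : ℕ} (t : ℕ → Fin d → V) (s : ℕ) (v : V) : Set V :=
  {u | G.Adj v u ∧ u ∉ protectedSet t s}

/-- The mobile searchers located on `v` at stage `s` (those having moved fewer
than `k` times). -/
def mobileOn (k : ℕ) {d : ℕ} (t : ℕ → Fin d → V) (s : ℕ) (v : V) : Set (Fin d) :=
  {i | t s i = v ∧ movesBefore t i s < k}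

/-- A valid play of the `k`-move deduction game with `d` searchers:
searchers move along edges (or stay); each searcher moves at most `k` times;
the mobile searchers on a vertex `v` move, covering all unprotected neighbours
of `v`, exactly when there is at least one unprotected neighbour and the number
of mobile searchers on `v` is at least the number of unprotected neighbours of
`v`; otherwise the searchers on `v` stay put. -/
def ValidPlay (G : SimpleGraph V) (k : ℕ) {d : ℕ} (t : ℕ → Fin d → V) : Prop :=
  (∀ i s, t (s + 1) i = t s i ∨ G.Adj (t s i) (t (s + 1) i)) ∧
  (∀ i s, movesBefore t i s ≤ k) ∧
  (∀ s v,
    (((unprotNbrs G t s v).Nonempty ∧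
        (unprotNbrs G t s v).ncard ≤ (mobileOn k t s v).ncard) →
      (∀ i ∈ mobileOn k t s v, t (s + 1) i ∈ unprotNbrs G t s v) ∧
      (∀ u ∈ unprotNbrs G t s v, ∃ i ∈ mobileOn k t s v, t (s + 1) i = u)) ∧
    ((¬ ((unprotNbrs G t s v).Nonempty ∧
        (unprotNbrs G t s v).ncard ≤ (mobileOn k t s v).ncard)) →
      ∀ i, t s i = v → t (s + 1) i = t s i))

/-- A successful play: a valid play in which every vertex is eventually
protected (occupied by some searcher at some stage). -/
def Successful (G : SimpleGraph V) (k : ℕ) {d : ℕ} (t : ℕ → Fin d → V) : Prop :=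
  ValidPlay G k t ∧ ∀ v : V, ∃ (i : Fin d) (s : ℕ), t s i = v

/-- The `k`-move deduction number: the least number of searchers admitting a
successful layout (play) of the `k`-move deduction game on `G`. -/
noncomputable def deductionNumber (G : SimpleGraph V) (k : ℕ) : ℕ :=
  sInf {d : ℕ | ∃ t : ℕ → Fin d → V, Successful G k t}

end Deduction

/-!
A searcher that moves at most `k` times visits at most `k + 1` vertices, so a successful layout
with `d` searchers on `n` vertices has `n ≤ d (k + 1)`.

Conversely, cut the path into `d = ⌈n / (k + 1)⌉` consecutive blocks of between `2` and `k + 1`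
vertices (possible as `k ≥ 2`) and put one searcher on the left end of each block. The first
searcher walks to the right end of its block. Every other searcher starts with two unprotected
neighbours and is stuck until its predecessor has protected its left neighbour, i.e. has finished
its block; it then walks along its own block, which it can do with its `k` moves.
-/

namespace Deduction

variable {V : Type*}

/-- The third clause of `ValidPlay`, at stage `s` and vertex `v`. -/
def MoveRuleAt (G : SimpleGraph V) (k : ℕ) {d : ℕ} (t : ℕ → Fin d → V) (s : ℕ) (v : V) :
    Prop :=
  (((unprotNbrs G t s v).Nonempty ∧
        (unprotNbrs G t s v).ncard ≤ (mobileOn k t s v).ncard) →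
      (∀ i ∈ mobileOn k t s v, t (s + 1) i ∈ unprotNbrs G t s v) ∧
      (∀ u ∈ unprotNbrs G t s v, ∃ i ∈ mobileOn k t s v, t (s + 1) i = u)) ∧
    ((¬ ((unprotNbrs G t s v).Nonempty ∧
        (unprotNbrs G t s v).ncard ≤ (mobileOn k t s v).ncard)) →
      ∀ i, t s i = v → t (s + 1) i = t s i)

section MoveRule

variable {G : SimpleGraph V} {k d : ℕ} {t : ℕ → Fin d → V} {s : ℕ} {v : V}

theorem moveRuleAt_of_blocked
    (hblocked : unprotNbrs G t s v = ∅ ∨ (mobileOn k t s v).ncard < (unprotNbrs G t s v).ncard)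
    (hstay : ∀ i, t s i = v → t (s + 1) i = t s i) : MoveRuleAt G k t s v := by
  refine ⟨fun ⟨hne, hle⟩ => ?_, fun _ => hstay⟩
  rcases hblocked with h | h
  · exact absurd h hne.ne_empty
  · omega

theorem moveRuleAt_of_unoccupied [Finite V] (h : ∀ i, t s i ≠ v) : MoveRuleAt G k t s v := by
  have hM : mobileOn k t s v = ∅ := Set.eq_empty_of_forall_notMem fun i hi => h i hi.1
  refine moveRuleAt_of_blocked ?_ fun i hi => absurd hi (h i)
  rw [hM, Set.ncard_empty, Set.ncard_pos]
  exact (unprotNbrs G t s v).eq_empty_or_nonempty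

theorem moveRuleAt_of_single {u : V} {i : Fin d} (hU : unprotNbrs G t s v = {u})
    (hM : mobileOn k t s v = {i}) (hi : t (s + 1) i = u) : MoveRuleAt G k t s v := by
  refine ⟨fun _ => ⟨?_, ?_⟩, fun h => absurd ⟨?_, ?_⟩ h⟩
  · rintro i' hi'
    rw [hM, Set.mem_singleton_iff] at hi'
    rw [hi', hU, hi]
    rfl
  · rintro u' hu'
    rw [hU, Set.mem_singleton_iff] at hu'
    exact ⟨i, hM ▸ rfl, hi.trans hu'.symm⟩
  · exact hU ▸ Set.singleton_nonempty u
  · rw [hU, hM, Set.ncard_singleton, Set.ncard_singleton]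

end MoveRule

section LowerBound

variable {k d : ℕ}

theorem movesBefore_eq_sum [DecidableEq V] (t : ℕ → Fin d → V) (i : Fin d) (s : ℕ) :
    movesBefore t i s = ∑ s' ∈ Finset.range s, if t (s' + 1) i ≠ t s' i then 1 else 0 := by
  rw [← Finset.card_filter, movesBefore, ← Set.ncard_coe_finset]
  congr 1
  ext s'
  simp

theorem card_image_range_le_movesBefore [DecidableEq V] (t : ℕ → Fin d → V) (i : Fin d)
    (s : ℕ) : ((Finset.range (s + 1)).image (t · i)).card ≤ movesBefore t i s + 1 := by
  induction s with
  | zero => simp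
  | succ s ih =>
    rw [Finset.range_add_one, Finset.image_insert, movesBefore_eq_sum, Finset.sum_range_succ,
      ← movesBefore_eq_sum]
    by_cases hstay : t (s + 1) i = t s i
    · rw [Finset.insert_eq_of_mem (hstay ▸ Finset.mem_image_of_mem _ (by simp))]
      simpa [hstay] using ih
    · simpa [hstay] using (Finset.card_insert_le _ _).trans (Nat.succ_le_succ ih)

theorem card_le_mul_of_successful [Fintype V] {G : SimpleGraph V} {t : ℕ → Fin d → V}
    (h : Successful G k t) : Fintype.card V ≤ d * (k + 1) := by
  classical
  choose searcher time htime using h.2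
  let S := Finset.univ.sup time
  have hcover : (Finset.univ : Finset V) ⊆
      Finset.univ.biUnion fun i => (Finset.range (S + 1)).image (t · i) := fun v _ =>
    Finset.mem_biUnion.2 ⟨searcher v, Finset.mem_univ _, Finset.mem_image.2
      ⟨time v, Finset.mem_range.2 (Nat.lt_succ_of_le (Finset.le_sup (Finset.mem_univ v))),
        htime v⟩⟩
  calc Fintype.card V
      ≤ ∑ i, ((Finset.range (S + 1)).image (t · i)).card :=
        (Finset.card_le_card hcover).trans Finset.card_biUnion_le
    _ ≤ ∑ _i : Fin d, (k + 1) := Finset.sum_le_sum fun i _ =>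
        (card_image_range_le_movesBefore t i S).trans (Nat.succ_le_succ (h.1.2.1 i S))
    _ = d * (k + 1) := by simp

end LowerBound

/-- `L` cuts `[0, n)` into the `d` blocks `[L j, L (j + 1))`. -/
structure BlockPartition (k n d : ℕ) (L : ℕ → ℕ) : Prop where
  zero_eq : L 0 = 0
  last_eq : L d = n
  add_two_le_succ : ∀ j < d, L j + 2 ≤ L (j + 1)
  succ_le_add : ∀ j < d, L (j + 1) ≤ L j + (k + 1)

theorem exists_blockPartition {k n d : ℕ} (hk : 1 ≤ k) (h2d : 2 * d ≤ n)
    (hn : n ≤ d * (k + 1)) : ∃ L, BlockPartition k n d L := by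
  -- `j * (k + 1)` and `n - 2 * (d - j)` have increments in `[2, k + 1]`; so does their min
  refine ⟨fun j => min (j * (k + 1)) (n - 2 * (d - j)), ?_, ?_, fun j hj => ?_, fun j hj => ?_⟩
  · simp
  · simpa using hn
  all_goals
    have : (j + 1) * (k + 1) = j * (k + 1) + (k + 1) := Nat.succ_mul j (k + 1)
    omega

/-- Searcher `j` sits at `L j`, where it has two unprotected neighbours, until searcher `j - 1`
reaches `L j - 1` at stage `L j - j`; from then on it walks right one vertex per stage to the
end of its block. -/
def sweepPos (L : ℕ → ℕ) (j s : ℕ) : ℕ := max (L j) (min (s + j) (L (j + 1) - 1))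

theorem le_sweepPos (L : ℕ → ℕ) (j s : ℕ) : L j ≤ sweepPos L j s := le_max_left _ _

theorem sweepPos_mono (L : ℕ → ℕ) (j : ℕ) : Monotone (sweepPos L j) := fun s s' h => by
  unfold sweepPos
  omega

namespace BlockPartition

variable {k n d : ℕ} {L : ℕ → ℕ} {j j' s : ℕ}

theorem monotone (hL : BlockPartition k n d L) (h : j ≤ j') (h' : j' ≤ d) : L j ≤ L j' := by
  induction j', h using Nat.le_induction with
  | base => rfl
  | succ m _ ih =>
    have := hL.add_two_le_succ m (by omega)
    exact (ih (by omega)).trans (by omega)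

theorem le_last (hL : BlockPartition k n d L) (h : j ≤ d) : L j ≤ n :=
  hL.last_eq ▸ hL.monotone h le_rfl

theorem two_mul_le (hL : BlockPartition k n d L) (h : j ≤ d) : 2 * j ≤ L j := by
  induction j with
  | zero => simp
  | succ m ih =>
    have := hL.add_two_le_succ m (by omega)
    have := ih (by omega)
    omega

theorem eq_of_mem_block (hL : BlockPartition k n d L) {v : ℕ} (hj : j < d) (hj' : j' < d)
    (h₁ : L j ≤ v) (h₂ : v < L (j + 1)) (h₁' : L j' ≤ v) (h₂' : v < L (j' + 1)) :
    j = j' := by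
  by_contra hne
  rcases Nat.lt_or_gt_of_ne hne with h | h
  · have := hL.monotone (show j + 1 ≤ j' by omega) hj'.le
    omega
  · have := hL.monotone (show j' + 1 ≤ j by omega) hj.le
    omega

theorem exists_block (hL : BlockPartition k n d L) {v : ℕ} (hv : v < n) :
    ∃ j < d, L j ≤ v ∧ v < L (j + 1) := by
  classical
  set j := Nat.findGreatest (fun m => L m ≤ v) d
  have hLj : L j ≤ v :=
    Nat.findGreatest_spec (P := fun m => L m ≤ v) (Nat.zero_le d) (by simp [hL.zero_eq])
  have hjd : j < d := lt_of_le_of_ne (Nat.findGreatest_le d) fun h => by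
    rw [h, hL.last_eq] at hLj
    omega
  exact ⟨j, hjd, hLj,
    not_le.1 (Nat.findGreatest_is_greatest (P := fun m => L m ≤ v) (Nat.lt_succ_self j) hjd)⟩

theorem sweepPos_lt (hL : BlockPartition k n d L) (hj : j < d) : sweepPos L j s < L (j + 1) := by
  have := hL.add_two_le_succ j hj
  unfold sweepPos
  omega

def play (hL : BlockPartition k n d L) (s : ℕ) (i : Fin d) : Fin n :=
  ⟨sweepPos L i s, (hL.sweepPos_lt i.isLt).trans_le (hL.le_last i.isLt)⟩

@[simp]
theorem play_val (hL : BlockPartition k n d L) (s : ℕ) (i : Fin d) :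
    (hL.play s i : ℕ) = sweepPos L i s := rfl

theorem play_injective (hL : BlockPartition k n d L) (s : ℕ) :
    Function.Injective (hL.play s) := fun i i' h => by
  have h : sweepPos L i s = sweepPos L i' s := congrArg Fin.val h
  exact Fin.ext <| hL.eq_of_mem_block i.isLt i'.isLt (le_sweepPos L i s)
    (hL.sweepPos_lt i.isLt) (h ▸ le_sweepPos L i' s) (h ▸ hL.sweepPos_lt i'.isLt)

theorem mem_protectedSet_play (hL : BlockPartition k n d L) {u : Fin n} :
    u ∈ protectedSet hL.play s ↔ ∃ j < d, L j ≤ u ∧ u ≤ sweepPos L j s := by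
  constructor
  · rintro ⟨i, s', hs', rfl⟩
    exact ⟨i, i.isLt, le_sweepPos L i s', sweepPos_mono L i hs'⟩
  · rintro ⟨j, hj, h₁, h₂⟩
    have := hL.two_mul_le hj.le
    refine ⟨⟨j, hj⟩, min s (u - j), min_le_left _ _, Fin.ext ?_⟩
    simp only [play_val, sweepPos] at h₂ ⊢
    omega

theorem notMem_protectedSet_play (hL : BlockPartition k n d L) {u : Fin n} (hj : j < d)
    (h₁ : sweepPos L j s < u) (h₂ : u < L (j + 1)) : u ∉ protectedSet hL.play s := by
  rw [mem_protectedSet_play]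
  rintro ⟨j', hj', h₁', h₂'⟩
  have := hL.sweepPos_lt hj' (s := s)
  have := le_sweepPos L j s
  obtain rfl := hL.eq_of_mem_block hj' hj h₁' (by omega) (by omega) h₂
  omega

theorem movesBefore_play (hL : BlockPartition k n d L) (i : Fin d) (s : ℕ) :
    movesBefore hL.play i s = min s (L (i + 1) - 1 - i) - (L i - i) := by
  rw [movesBefore, ← Set.ncard_Ico_nat]
  congr 1
  ext s'
  simp only [Set.mem_ofPred_eq, Set.mem_Ico, ne_eq, Fin.ext_iff, play_val, sweepPos]
  omega

theorem play_succ_eq_of_not_moving (hL : BlockPartition k n d L) (i : Fin d)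
    (h : s + i < L i ∨ L (i + 1) ≤ s + i + 1) : hL.play (s + 1) i = hL.play s i := by
  ext
  simp only [play_val, sweepPos]
  omega

theorem moveRuleAt_waiting (hL : BlockPartition k n d L) (j : Fin d) (hwait : s + j < L j) :
    MoveRuleAt (SimpleGraph.pathGraph n) k hL.play s (hL.play s j) := by
  obtain ⟨p, hp⟩ := Nat.exists_eq_add_one_of_ne_zero fun h : (j : ℕ) = 0 => by
    simp [h, hL.zero_eq] at hwait
  have hprev := hL.add_two_le_succ p (by omega)
  have hnext := hL.add_two_le_succ j j.isLt
  have hlast := hL.le_last (j := j + 1) j.isLt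
  rw [← hp] at hprev
  have hv : sweepPos L j s = L j := by unfold sweepPos; omega
  let left : Fin n := ⟨L j - 1, by omega⟩
  let right : Fin n := ⟨L j + 1, by omega⟩
  have hU : {left, right} ⊆ unprotNbrs (SimpleGraph.pathGraph n) hL.play s (hL.play s j) := by
    rintro u (rfl | rfl) <;> refine ⟨SimpleGraph.pathGraph_adj.2 ?_, ?_⟩
    · simp only [left, play_val, hv]
      omega
    · refine hL.notMem_protectedSet_play (j := p) (by omega) ?_ ?_
      · simp only [left, sweepPos, ← hp]
        omega
      · simp only [left, ← hp]
        omega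
    · simp [right, hv]
    · exact hL.notMem_protectedSet_play j.isLt (by simp [right, hv])
        (show L j + 1 < L (j + 1) by omega)
  have hM : mobileOn k hL.play s (hL.play s j) ⊆ {j} := fun i hi => hL.play_injective s hi.1
  refine moveRuleAt_of_blocked (Or.inr ?_) fun i hi => ?_
  · calc (mobileOn k hL.play s (hL.play s j)).ncard
        ≤ ({j} : Set (Fin d)).ncard := Set.ncard_le_ncard hM
      _ < ({left, right} : Set (Fin n)).ncard := by
        rw [Set.ncard_singleton, Set.ncard_pair (by simp [left, right, Fin.ext_iff])]
        omega
      _ ≤ _ := Set.ncard_le_ncard hU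
  · rw [hL.play_injective s hi]
    exact hL.play_succ_eq_of_not_moving j (Or.inl hwait)

theorem moveRuleAt_moving (hL : BlockPartition k n d L) (j : Fin d) (hstart : L j ≤ s + j)
    (hend : s + j + 1 < L (j + 1)) :
    MoveRuleAt (SimpleGraph.pathGraph n) k hL.play s (hL.play s j) := by
  have hlast := hL.le_last (j := j + 1) j.isLt
  have hv : sweepPos L j s = s + j := by unfold sweepPos; omega
  let next : Fin n := ⟨s + j + 1, by omega⟩
  have hprotected (u : Fin n) (hu : u + 1 = s + j) : u ∈ protectedSet hL.play s := by
    rw [mem_protectedSet_play]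
    by_cases hu' : L j ≤ u
    · exact ⟨j, j.isLt, hu', by omega⟩
    · obtain ⟨p, hp⟩ := Nat.exists_eq_add_one_of_ne_zero fun h : (j : ℕ) = 0 => by
        simp [h, hL.zero_eq] at hu'
      have hprev := hL.add_two_le_succ p (by omega)
      rw [← hp] at hprev
      refine ⟨p, by omega, by omega, ?_⟩
      simp only [sweepPos, ← hp]
      omega
  have hU : unprotNbrs (SimpleGraph.pathGraph n) hL.play s (hL.play s j) = {next} := by
    ext u
    simp only [unprotNbrs, Set.mem_ofPred_eq, SimpleGraph.pathGraph_adj, play_val, hv,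
      Set.mem_singleton_iff, Fin.ext_iff, next]
    constructor
    · rintro ⟨h | h, hu⟩
      · omega
      · exact absurd (hprotected u h) hu
    · intro h
      exact ⟨Or.inl h.symm, hL.notMem_protectedSet_play j.isLt (by simp [hv, h]) (by omega)⟩
  have hM : mobileOn k hL.play s (hL.play s j) = {j} := by
    ext i
    refine ⟨fun hi => hL.play_injective s hi.1, fun hi => ?_⟩
    rw [Set.mem_singleton_iff.1 hi]
    refine ⟨rfl, ?_⟩
    have := hL.succ_le_add j j.isLt
    rw [movesBefore_play]
    omega
  refine moveRuleAt_of_single hU hM (Fin.ext ?_)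
  simp only [play_val, sweepPos, next]
  omega

theorem moveRuleAt_done (hL : BlockPartition k n d L) (j : Fin d)
    (hdone : L (j + 1) ≤ s + j + 1) :
    MoveRuleAt (SimpleGraph.pathGraph n) k hL.play s (hL.play s j) := by
  have hblock := hL.add_two_le_succ j j.isLt
  have hv : sweepPos L j s = L (j + 1) - 1 := by
    unfold sweepPos
    omega
  refine moveRuleAt_of_blocked (Or.inl ?_) fun i hi => ?_
  · refine Set.eq_empty_of_forall_notMem fun u ⟨hadj, hu⟩ => hu ?_
    rw [SimpleGraph.pathGraph_adj, play_val, hv] at hadj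
    rw [mem_protectedSet_play]
    rcases hadj with h | h
    · have hj : (j : ℕ) + 1 < d := lt_of_le_of_ne j.isLt fun hd => by
        rw [hd, hL.last_eq] at h
        omega
      exact ⟨j + 1, hj, by omega, by have := le_sweepPos L ((j : ℕ) + 1) s; omega⟩
    · exact ⟨j, j.isLt, by omega, by omega⟩
  · rw [hL.play_injective s hi]
    exact hL.play_succ_eq_of_not_moving j (Or.inr hdone)

theorem validPlay (hL : BlockPartition k n d L) :
    ValidPlay (SimpleGraph.pathGraph n) k hL.play := by
  refine ⟨fun i s => ?_, fun i s => ?_, fun s v => ?_⟩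
  · rw [SimpleGraph.pathGraph_adj, Fin.ext_iff]
    simp only [play_val, sweepPos]
    omega
  · have := hL.succ_le_add i i.isLt
    have := hL.two_mul_le i.isLt.le
    rw [movesBefore_play]
    omega
  · show MoveRuleAt _ k hL.play s v
    by_cases hocc : ∃ j, hL.play s j = v
    · obtain ⟨j, rfl⟩ := hocc
      by_cases hwait : s + j < L j
      · exact hL.moveRuleAt_waiting j hwait
      by_cases hdone : L (j + 1) ≤ s + j + 1
      · exact hL.moveRuleAt_done j hdone
      · exact hL.moveRuleAt_moving j (by omega) (by omega)
    · exact moveRuleAt_of_unoccupied fun i hi => hocc ⟨i, hi⟩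

theorem successful (hL : BlockPartition k n d L) :
    Successful (SimpleGraph.pathGraph n) k hL.play := by
  refine ⟨hL.validPlay, fun v => ?_⟩
  obtain ⟨j, hj, h₁, h₂⟩ := hL.exists_block v.isLt
  have := hL.le_last hj
  obtain ⟨i, s, -, hs⟩ := (hL.mem_protectedSet_play (s := n)).2
    ⟨j, hj, h₁, by simp only [sweepPos]; omega⟩
  exact ⟨i, s, hs⟩

end BlockPartition

end Deduction

theorem Nat.ceil_div_succ_le_iff (n k m : ℕ) :
    ⌈(n : ℚ) / (k + 1)⌉₊ ≤ m ↔ n ≤ m * (k + 1) := by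
  rw [Nat.ceil_le, div_le_iff₀ (by positivity)]
  exact_mod_cast Iff.rfl

/-- `d_k(P_n) = ⌈n / (k+1)⌉` for `k ≥ 2`, `n ≥ 2`. -/
theorem stmt_10 (k n : ℕ) (hk : 2 ≤ k) (hn : 2 ≤ n) :
    Deduction.deductionNumber (SimpleGraph.pathGraph n) k =
      ⌈(n : ℚ) / (k + 1)⌉₊ := by
  set c := ⌈(n : ℚ) / (k + 1)⌉₊
  have hc : ∀ m, c ≤ m ↔ n ≤ m * (k + 1) := Nat.ceil_div_succ_le_iff n k
  have hc_half : c ≤ n / 2 := (hc _).2 <| by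
    have : n / 2 * 3 ≤ n / 2 * (k + 1) := Nat.mul_le_mul_left _ (by omega)
    omega
  obtain ⟨L, hL⟩ :=
    Deduction.exists_blockPartition (k := k) (by omega) (by omega) ((hc c).1 le_rfl)
  refine le_antisymm (Nat.sInf_le ⟨hL.play, hL.successful⟩) ?_
  refine le_csInf ⟨c, hL.play, hL.successful⟩ fun m ⟨t, ht⟩ => (hc m).2 ?_
  simpa using Deduction.card_le_mul_of_successful ht
end

section
/- For all integers k ≥ 2 and n ≥ 3, the k-move deduction number of the cycle C_n equals max{2, ⌈n/(k+1)⌉}. -/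
namespace Deduction

open SimpleGraph Fin.NatCast Fin.CommRing

variable {V : Type*}

section Rule

variable {G : SimpleGraph V} {k d : ℕ} {t : ℕ → Fin d → V} {s : ℕ} {v : V}

/-- The clause of `ValidPlay` that governs the searchers on `v` at stage `s`. -/
def ObeysRuleAt (G : SimpleGraph V) (k : ℕ) (t : ℕ → Fin d → V) (s : ℕ) (v : V) : Prop :=
  ((unprotNbrs G t s v).Nonempty ∧
      (unprotNbrs G t s v).ncard ≤ (mobileOn k t s v).ncard →
    (∀ i ∈ mobileOn k t s v, t (s + 1) i ∈ unprotNbrs G t s v) ∧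
    (∀ u ∈ unprotNbrs G t s v, ∃ i ∈ mobileOn k t s v, t (s + 1) i = u)) ∧
  (¬ ((unprotNbrs G t s v).Nonempty ∧
      (unprotNbrs G t s v).ncard ≤ (mobileOn k t s v).ncard) →
    ∀ i, t s i = v → t (s + 1) i = t s i)

theorem obeysRuleAt_of_stay
    (h : ¬ ((unprotNbrs G t s v).Nonempty ∧
      (unprotNbrs G t s v).ncard ≤ (mobileOn k t s v).ncard))
    (hstay : ∀ i, t s i = v → t (s + 1) i = t s i) : ObeysRuleAt G k t s v :=
  ⟨fun h' => absurd h' h, fun _ => hstay⟩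

theorem obeysRuleAt_of_forall_adj_protected (hprot : ∀ w, G.Adj v w → w ∈ protectedSet t s)
    (hstay : ∀ i, t s i = v → t (s + 1) i = t s i) : ObeysRuleAt G k t s v :=
  obeysRuleAt_of_stay (fun ⟨⟨w, hadj, hw⟩, _⟩ => hw (hprot w hadj)) hstay

theorem mobileOn_subset_singleton {i : Fin d} (huniq : ∀ j, t s j = v → j = i) :
    mobileOn k t s v ⊆ {i} :=
  fun j hj => huniq j hj.1

theorem obeysRuleAt_of_mobileOn_eq_empty [Finite V] (hM : mobileOn k t s v = ∅)
    (hstay : ∀ i, t s i = v → t (s + 1) i = t s i) : ObeysRuleAt G k t s v := by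
  refine obeysRuleAt_of_stay (fun ⟨hne, hle⟩ => hne.ne_empty ?_) hstay
  rwa [hM, Set.ncard_empty, Nat.le_zero, Set.ncard_eq_zero] at hle

theorem obeysRuleAt_of_unoccupied [Finite V] (h : ∀ i, t s i ≠ v) : ObeysRuleAt G k t s v :=
  obeysRuleAt_of_mobileOn_eq_empty (Set.eq_empty_of_forall_notMem fun i hi => h i hi.1)
    fun i hi => absurd hi (h i)

theorem obeysRuleAt_of_unique_move {i : Fin d} {u : V} (hv : t s i = v)
    (huniq : ∀ j, t s j = v → j = i) (hmob : movesBefore t i s < k)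
    (hU : unprotNbrs G t s v = {u}) (hmove : t (s + 1) i = u) : ObeysRuleAt G k t s v := by
  have hM : mobileOn k t s v = {i} :=
    (mobileOn_subset_singleton huniq).antisymm (Set.singleton_subset_iff.2 ⟨hv, hmob⟩)
  refine ⟨fun _ => ⟨?_, ?_⟩, fun h => absurd ⟨?_, ?_⟩ h⟩
  · intro j hj
    rw [hM, Set.mem_singleton_iff] at hj
    rw [hj, hmove, hU]
    rfl
  · intro w hw
    rw [hU, Set.mem_singleton_iff] at hw
    exact ⟨i, hM ▸ rfl, hmove.trans hw.symm⟩
  · simp [hU]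
  · simp [hU, hM]

theorem obeysRuleAt_of_unique_stay [Finite V] {i : Fin d} (huniq : ∀ j, t s j = v → j = i)
    (hstay : t (s + 1) i = t s i)
    (h : k ≤ movesBefore t i s ∨
      ∃ u w, u ≠ w ∧ u ∈ unprotNbrs G t s v ∧ w ∈ unprotNbrs G t s v) :
    ObeysRuleAt G k t s v := by
  have hstay' : ∀ j, t s j = v → t (s + 1) j = t s j := fun j hj => huniq j hj ▸ hstay
  rcases h with h | ⟨u, w, huw, hu, hw⟩
  · exact obeysRuleAt_of_mobileOn_eq_empty (Set.eq_empty_of_forall_notMem fun j hj =>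
      (huniq j hj.1 ▸ hj.2).not_ge h) hstay'
  refine obeysRuleAt_of_stay (fun ⟨_, hle⟩ => ?_) hstay'
  have h2 : 2 ≤ (unprotNbrs G t s v).ncard := by
    rw [← Set.ncard_pair huw]
    exact Set.ncard_le_ncard (Set.pair_subset hu hw)
  have h1 : (mobileOn k t s v).ncard ≤ 1 :=
    (Set.ncard_le_ncard (mobileOn_subset_singleton huniq)).trans (Set.ncard_singleton i).le
  omega

theorem unprotNbrs_eq_singleton {u : V} (hu : G.Adj v u) (hu' : u ∉ protectedSet t s)
    (hother : ∀ w, G.Adj v w → w ≠ u → w ∈ protectedSet t s) :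
    unprotNbrs G t s v = {u} := by
  ext w
  refine ⟨fun ⟨hadj, hw⟩ => by_contra fun hne => hw (hother w hadj hne), ?_⟩
  rintro rfl
  exact ⟨hu, hu'⟩

end Rule

section LowerBounds

variable {G : SimpleGraph V} {k d : ℕ} {t : ℕ → Fin d → V}

theorem movesBefore_eq_card [DecidableEq V] (t : ℕ → Fin d → V) (i : Fin d) (s : ℕ) :
    movesBefore t i s = ((Finset.range s).filter fun s' => t (s' + 1) i ≠ t s' i).card := by
  rw [movesBefore, ← Set.ncard_coe_finset]
  congr 1
  ext s'
  simp

theorem movesBefore_succ [DecidableEq V] (t : ℕ → Fin d → V) (i : Fin d) (s : ℕ) :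
    movesBefore t i (s + 1) = movesBefore t i s + if t (s + 1) i ≠ t s i then 1 else 0 := by
  rw [movesBefore_eq_card, movesBefore_eq_card, Finset.range_add_one, Finset.filter_insert]
  split_ifs with h
  · exact Finset.card_insert_of_notMem (by simp)
  · rfl

theorem movesBefore_eq_of_forall_moves_iff {t : ℕ → Fin d → V} {i : Fin d} {b L : ℕ}
    (h : ∀ s, t (s + 1) i ≠ t s i ↔ b ≤ s ∧ s < b + L) (s : ℕ) :
    movesBefore t i s = min (s - b) L := by
  have : {s' | s' < s ∧ t (s' + 1) i ≠ t s' i} = ↑(Finset.Ico b (min s (b + L))) := by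
    ext s'
    simp only [Set.mem_ofPred_eq, h s', Finset.coe_Ico, Set.mem_Ico]
    omega
  rw [movesBefore, this, Set.ncard_coe_finset, Nat.card_Ico]
  omega

theorem card_visited_le [DecidableEq V] (t : ℕ → Fin d → V) (i : Fin d) (S : ℕ) :
    ((Finset.range (S + 1)).image fun s => t s i).card ≤ movesBefore t i S + 1 := by
  induction S with
  | zero => simp [movesBefore_eq_card]
  | succ S ih =>
    rw [Finset.range_add_one, Finset.image_insert, movesBefore_succ]
    by_cases h : t (S + 1) i = t S i
    · rw [Finset.insert_eq_of_mem (Finset.mem_image.2 ⟨S, by simp, h.symm⟩)]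
      simpa [h] using ih
    · simpa [h] using (Finset.card_insert_le _ _).trans (Nat.add_le_add_right ih 1)

theorem card_le_of_successful [Fintype V] (h : Successful G k t) :
    Fintype.card V ≤ d * (k + 1) := by
  classical
  obtain ⟨⟨-, hmoves, -⟩, hcov⟩ := h
  choose i s hs using hcov
  let S := Finset.univ.sup s
  have hsub : (Finset.univ : Finset V) ⊆
      Finset.univ.biUnion fun j => (Finset.range (S + 1)).image fun s' => t s' j :=
    fun v _ => Finset.mem_biUnion.2 ⟨i v, Finset.mem_univ _, Finset.mem_image.2
      ⟨s v, Finset.mem_range.2 (Nat.lt_succ_of_le (Finset.le_sup (Finset.mem_univ v))), hs v⟩⟩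
  calc Fintype.card V ≤ ∑ j : Fin d, ((Finset.range (S + 1)).image fun s' => t s' j).card :=
        (Finset.card_le_card hsub).trans Finset.card_biUnion_le
    _ ≤ ∑ _j : Fin d, (k + 1) :=
        Finset.sum_le_sum fun j _ =>
          (card_visited_le t j S).trans (Nat.add_le_add_right (hmoves j S) 1)
    _ = d * (k + 1) := by simp

theorem degree_le_ncard_unprotNbrs_add [Fintype V] [DecidableRel G.Adj] (s : ℕ) (v : V)
    (hfix : ∀ s' ≤ s, t s' = t 0) :
    G.degree v ≤ (unprotNbrs G t s v).ncard + {j | t 0 j ≠ v}.ncard := by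
  have hsub : G.neighborSet v ⊆ unprotNbrs G t s v ∪ t 0 '' {j | t 0 j ≠ v} := by
    intro w hw
    by_cases hp : w ∈ protectedSet t s
    · obtain ⟨j, s', hs', rfl⟩ := hp
      rw [hfix s' hs'] at hw ⊢
      exact Or.inr ⟨j, fun h => G.ne_of_adj hw h.symm, rfl⟩
    · exact Or.inl ⟨hw, hp⟩
  calc G.degree v = (G.neighborSet v).ncard := by
        rw [Set.ncard_eq_toFinset_card']; rfl
    _ ≤ _ := (Set.ncard_le_ncard hsub).trans (Set.ncard_union_le _ _)
    _ ≤ _ := Nat.add_le_add_left (Set.ncard_image_le (Set.toFinite _)) _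

/-- With fewer searchers than the minimum degree nobody can ever move, since the protected
neighbours of a vertex are occupied by the searchers elsewhere. -/
theorem eq_initial_of_lt_minDegree [Fintype V] [DecidableRel G.Adj] (hv : ValidPlay G k t)
    (hlt : d < G.minDegree) (s : ℕ) : t s = t 0 := by
  induction s using Nat.strong_induction_on with
  | _ s ih =>
    rcases s with _ | s
    · rfl
    have ih' : ∀ s' ≤ s, t s' = t 0 := fun s' hs' => ih s' (by omega)
    funext i
    rw [← ih' s le_rfl]
    refine (hv.2.2 s (t s i)).2 (fun ⟨_, hle⟩ => ?_) i rfl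
    have hdeg := degree_le_ncard_unprotNbrs_add (G := G) s (t s i) ih'
    have hM : (mobileOn k t s (t s i)).ncard ≤ {j | t 0 j = t s i}.ncard :=
      Set.ncard_le_ncard fun j hj => by
        show t 0 j = t s i
        rw [← congrFun (ih' s le_rfl) j]
        exact hj.1
    have hd : {j | t 0 j = t s i}.ncard + {j | t 0 j ≠ t s i}.ncard = d := by
      convert Set.ncard_add_ncard_compl {j | t 0 j = t s i} using 2 <;> simp [Set.compl_ofPred]
    have := G.minDegree_le_degree (t s i)
    omega

theorem minDegree_le_of_successful [Fintype V] [DecidableRel G.Adj] (h : Successful G k t) :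
    G.minDegree ≤ d := by
  classical
  by_contra! hlt
  have hcard : Fintype.card V ≤ d :=
    calc Fintype.card V ≤ (Finset.univ.image (t 0)).card := Finset.card_le_card fun v _ => by
          obtain ⟨i, s, rfl⟩ := h.2 v
          exact Finset.mem_image.2 ⟨i, Finset.mem_univ _,
            by rw [eq_initial_of_lt_minDegree h.1 hlt s]⟩
      _ ≤ d := Finset.card_image_le.trans (by simp)
  cases isEmpty_or_nonempty V
  · simp [SimpleGraph.minDegree_of_subsingleton] at hlt
  · have := G.minDegree_lt_card
    omega

end LowerBounds

section Cycle

theorem two_le_minDegree_cycleGraph {n : ℕ} (hn : 3 ≤ n) : 2 ≤ (cycleGraph n).minDegree := by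
  obtain ⟨m, rfl⟩ : ∃ m, n = m + 3 := ⟨n - 3, by omega⟩
  exact le_minDegree_of_forall_le_degree _ 2 fun v => cycleGraph_degree_three_le.ge

variable {n : ℕ} [NeZero n]

theorem cycleGraph_adj_iff (hn : 2 ≤ n) {v w : Fin n} :
    (cycleGraph n).Adj v w ↔ w = v - 1 ∨ w = v + 1 := by
  obtain ⟨m, rfl⟩ : ∃ m, n = m + 2 := ⟨n - 2, by omega⟩
  rw [← mem_neighborSet, cycleGraph_neighborSet]
  rfl

theorem natCast_injOn_Icc : Set.InjOn (Nat.cast : ℕ → Fin n) (Set.Icc 1 n) := by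
  intro a ha b hb hab
  have hval := congrArg Fin.val hab
  simp only [Fin.val_natCast] at hval
  rcases ha with ⟨ha1, ha2⟩
  rcases hb with ⟨hb1, hb2⟩
  rcases ha2.eq_or_lt with rfl | ha2 <;> rcases hb2.eq_or_lt with rfl | hb2
  · rfl
  · rw [Nat.mod_self, Nat.mod_eq_of_lt hb2] at hval; omega
  · rw [Nat.mod_self, Nat.mod_eq_of_lt ha2] at hval; omega
  · rwa [Nat.mod_eq_of_lt ha2, Nat.mod_eq_of_lt hb2] at hval

theorem exists_natCast_eq (v : Fin n) : ∃ w ∈ Set.Icc 1 n, (w : Fin n) = v := by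
  rcases eq_or_ne v.val 0 with h0 | h0
  · refine ⟨n, ⟨Nat.one_le_iff_ne_zero.2 (NeZero.ne n), le_rfl⟩, ?_⟩
    rw [Fin.natCast_self]
    exact (Fin.ext h0).symm
  · exact ⟨v.val, ⟨Nat.one_le_iff_ne_zero.2 h0, v.2.le⟩, Fin.cast_val_eq_self v⟩

variable {k d : ℕ} {t : ℕ → Fin d → Fin n} {s : ℕ} {i : Fin d}

theorem obeysRuleAt_cycleGraph_move_add_one (hn : 2 ≤ n) (huniq : ∀ j, t s j = t s i → j = i)
    (hmob : movesBefore t i s < k) (hl : t s i - 1 ∈ protectedSet t s)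
    (hr : t s i + 1 ∉ protectedSet t s) (hmove : t (s + 1) i = t s i + 1) :
    ObeysRuleAt (cycleGraph n) k t s (t s i) := by
  refine obeysRuleAt_of_unique_move rfl huniq hmob
    (unprotNbrs_eq_singleton ((cycleGraph_adj_iff hn).2 (Or.inr rfl)) hr fun w hw hne => ?_) hmove
  rcases (cycleGraph_adj_iff hn).1 hw with rfl | rfl
  · exact hl
  · exact absurd rfl hne

theorem obeysRuleAt_cycleGraph_move_sub_one (hn : 2 ≤ n) (huniq : ∀ j, t s j = t s i → j = i)
    (hmob : movesBefore t i s < k) (hl : t s i - 1 ∉ protectedSet t s)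
    (hr : t s i + 1 ∈ protectedSet t s) (hmove : t (s + 1) i = t s i - 1) :
    ObeysRuleAt (cycleGraph n) k t s (t s i) := by
  refine obeysRuleAt_of_unique_move rfl huniq hmob
    (unprotNbrs_eq_singleton ((cycleGraph_adj_iff hn).2 (Or.inl rfl)) hl fun w hw hne => ?_) hmove
  rcases (cycleGraph_adj_iff hn).1 hw with rfl | rfl
  · exact absurd rfl hne
  · exact hr

theorem obeysRuleAt_cycleGraph_of_protected (hn : 2 ≤ n) {v : Fin n}
    (hl : v - 1 ∈ protectedSet t s) (hr : v + 1 ∈ protectedSet t s)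
    (hstay : ∀ j, t s j = v → t (s + 1) j = t s j) : ObeysRuleAt (cycleGraph n) k t s v :=
  obeysRuleAt_of_forall_adj_protected
    (fun w hw => by rcases (cycleGraph_adj_iff hn).1 hw with rfl | rfl <;> assumption) hstay

theorem obeysRuleAt_cycleGraph_stay (hn : 3 ≤ n) (huniq : ∀ j, t s j = t s i → j = i)
    (hstay : t (s + 1) i = t s i)
    (h : k ≤ movesBefore t i s ∨ (t s i - 1 ∉ protectedSet t s ∧ t s i + 1 ∉ protectedSet t s)) :
    ObeysRuleAt (cycleGraph n) k t s (t s i) := by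
  refine obeysRuleAt_of_unique_stay huniq hstay (h.imp_right fun ⟨hl, hr⟩ =>
    ⟨_, _, ?_, ⟨(cycleGraph_adj_iff (by omega)).2 (Or.inl rfl), hl⟩,
      ⟨(cycleGraph_adj_iff (by omega)).2 (Or.inr rfl), hr⟩⟩)
  intro h2
  have : ((2 : ℕ) : Fin n) = ((n : ℕ) : Fin n) := by
    rw [Fin.natCast_self, Nat.cast_ofNat]
    linear_combination h2.symm
  exact absurd (natCast_injOn_Icc ⟨by omega, by omega⟩ ⟨by omega, le_rfl⟩ this) (by omega)

end Cycle

section RelayStart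

/-- Counted back from stage `R` in steps of `k`: the last relay searchers sweep `k` vertices
each, the first ones start at once. -/
def relayStart (d k R j : ℕ) : ℕ := R - (d - j) * k

variable {d k R : ℕ}

theorem relayStart_mono {i j : ℕ} (h : i ≤ j) : relayStart d k R i ≤ relayStart d k R j :=
  Nat.sub_le_sub_left (Nat.mul_le_mul_right k (Nat.sub_le_sub_left h d)) R

theorem relayStart_one (hRd : R ≤ (d - 1) * k) : relayStart d k R 1 = 0 :=
  Nat.sub_eq_zero_of_le hRd

theorem relayStart_self : relayStart d k R d = R := by simp [relayStart]

theorem relayStart_sub_one (hd : 1 ≤ d) : relayStart d k R (d - 1) = R - k := by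
  simp [relayStart, Nat.sub_sub_self hd]

theorem relayStart_le (i : ℕ) : relayStart d k R i ≤ R := Nat.sub_le _ _

theorem relayStart_eq_zero_of_le {i : ℕ} (hi : i < d) (hRk : R ≤ k) :
    relayStart d k R i = 0 := by
  have := relayStart_mono (d := d) (k := k) (R := R) (show i ≤ d - 1 by omega)
  rw [relayStart_sub_one (by omega)] at this
  omega

theorem relayStart_succ {j : ℕ} (hj : j < d) :
    relayStart d k R (j + 1) ≤ relayStart d k R j + k ∧
      (0 < relayStart d k R j → relayStart d k R (j + 1) = relayStart d k R j + k) := by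
  obtain ⟨e, he⟩ : ∃ e, d - j = e + 1 := ⟨d - j - 1, by omega⟩
  have he' : d - (j + 1) = e := by omega
  simp only [relayStart, he, he', add_mul, one_mul]
  omega

end RelayStart

section RelayCovered

variable {d k R : ℕ}

/-- The relay searchers `j = 1, …, d - 1` sweep the consecutive arcs
`[j + relayStart j, j + relayStart (j + 1)]`, each ending next to the start of the next one. -/
def RelayCovered (d k R s w : ℕ) : Prop :=
  ∃ j, 1 ≤ j ∧ j < d ∧ j + relayStart d k R j ≤ w ∧
    w ≤ j + min (max s (relayStart d k R j)) (relayStart d k R (j + 1))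

theorem exists_mem_relayArc (hRd : R ≤ (d - 1) * k) {w : ℕ} (hw1 : 1 ≤ w)
    (hw : w ≤ d - 1 + R) :
    ∃ j, 1 ≤ j ∧ j < d ∧ j + relayStart d k R j ≤ w ∧ w ≤ j + relayStart d k R (j + 1) := by
  have key : ∀ j, 1 ≤ j → j < d → w ≤ j + relayStart d k R (j + 1) →
      ∃ j, 1 ≤ j ∧ j < d ∧ j + relayStart d k R j ≤ w ∧ w ≤ j + relayStart d k R (j + 1) := by
    intro j
    induction j with
    | zero => omega
    | succ j ih =>
      intro hj1 hjd hw'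
      by_cases hlo : j + 1 + relayStart d k R (j + 1) ≤ w
      · exact ⟨j + 1, hj1, hjd, hlo, hw'⟩
      · have h1 : 1 ≤ j := by
          by_contra h
          obtain rfl : j = 0 := by omega
          rw [relayStart_one hRd] at hlo
          omega
        exact ih h1 (by omega) (by omega)
  have hd : 2 ≤ d := by
    by_contra hd
    rw [show d - 1 = 0 by omega, zero_mul] at hRd
    omega
  refine key (d - 1) (by omega) (by omega) ?_
  rw [Nat.sub_add_cancel (by omega : 1 ≤ d), relayStart_self]
  omega

theorem relayCovered_iff_of_mem_arc {s w j : ℕ} (hj1 : 1 ≤ j) (hjd : j < d)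
    (hlo : j + relayStart d k R j ≤ w) (hhi : w ≤ j + relayStart d k R (j + 1)) :
    RelayCovered d k R s w ↔ w ≤ j + max s (relayStart d k R j) := by
  constructor
  · rintro ⟨j', hj'1, hj'd, hlo', hhi'⟩
    rcases lt_trichotomy j' j with h | rfl | h
    · have := relayStart_mono (d := d) (k := k) (R := R) (show _ + 1 ≤ _ from h)
      omega
    · omega
    · have := relayStart_mono (d := d) (k := k) (R := R) (show _ + 1 ≤ _ from h)
      omega
  · intro h
    exact ⟨j, hj1, hjd, hlo, by omega⟩

theorem relayCovered_of_le (hRd : R ≤ (d - 1) * k) {s w i : ℕ} (hid : i < d)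
    (hs : relayStart d k R i ≤ s) (hw1 : 1 ≤ w) (hw : w ≤ i + min s (relayStart d k R (i + 1))) :
    RelayCovered d k R s w := by
  have hR := relayStart_mono (d := d) (k := k) (R := R) (show i + 1 ≤ d from hid)
  rw [relayStart_self] at hR
  obtain ⟨j, hj1, hjd, hlo, hhi⟩ := exists_mem_relayArc hRd hw1 (by omega)
  refine (relayCovered_iff_of_mem_arc hj1 hjd hlo hhi).2 ?_
  rcases lt_or_ge i j with h | h
  · have := relayStart_mono (d := d) (k := k) (R := R) (show _ + 1 ≤ _ from h)
    omega
  · rcases h.eq_or_lt with rfl | h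
    · omega
    · have := relayStart_mono (d := d) (k := k) (R := R) (show _ + 1 ≤ _ from h)
      omega

theorem le_of_relayCovered {s w : ℕ} (h : RelayCovered d k R s w) :
    w ≤ d - 1 + min (max s (relayStart d k R (d - 1))) R := by
  obtain ⟨j, hj1, hjd, -, hhi⟩ := h
  have h1 := relayStart_mono (d := d) (k := k) (R := R) (show j ≤ d - 1 by omega)
  have h2 := relayStart_mono (d := d) (k := k) (R := R) (show j + 1 ≤ d by omega)
  rw [relayStart_self] at h2
  omega

end RelayCovered

section RelayPlay

/-- Positions on the cycle, with vertex `0` represented by `n`: searcher `0` starts at `n` and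
sweeps `min k R` steps downwards from stage `0`; relay searcher `i ≥ 1` waits at `i + relayStart i`
and sweeps upwards between stages `relayStart i` and `relayStart (i + 1)`. -/
def relayPos (n d k R s i : ℕ) : ℕ :=
  if i = 0 then n - min s (min k R)
  else i + min (max s (relayStart d k R i)) (relayStart d k R (i + 1))

/-- The second alternative for `n` is the one where searcher `0` and the last relay searcher
arrive at the same vertex at stage `R`. -/
structure RelayParams (n d k R : ℕ) : Prop where
  one_le_k : 1 ≤ k
  two_le_d : 2 ≤ d
  one_le_R : 1 ≤ R
  R_le : R ≤ (d - 1) * k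
  n_eq : n = min k R + d + R ∨ (R ≤ k ∧ n + 1 = 2 * R + d)

def relayPlay (n d k R : ℕ) [NeZero n] (s : ℕ) (i : Fin d) : Fin n := (relayPos n d k R s i : ℕ)

variable {n d k R : ℕ}

theorem relayPlay_add_one [NeZero n] (s : ℕ) (i : Fin d) :
    relayPlay n d k R s i + 1 = ((relayPos n d k R s i + 1 : ℕ) : Fin n) := by
  rw [Nat.cast_succ]; rfl

theorem protectedSet_relayPlay [NeZero n] (s : ℕ) : protectedSet (relayPlay n d k R) s =
    Nat.cast '' {w | ∃ i < d, ∃ s' ≤ s, relayPos n d k R s' i = w} := by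
  ext v
  constructor
  · rintro ⟨i, s', hs', rfl⟩
    exact ⟨_, ⟨i, i.2, s', hs', rfl⟩, rfl⟩
  · rintro ⟨_, ⟨i, hi, s', hs', rfl⟩, rfl⟩
    exact ⟨⟨i, hi⟩, s', hs', rfl⟩

theorem relayPos_zero (s : ℕ) : relayPos n d k R s 0 = n - min s (min k R) := rfl

theorem relayPos_of_ne_zero {i : ℕ} (s : ℕ) (hi : i ≠ 0) :
    relayPos n d k R s i = i + min (max s (relayStart d k R i)) (relayStart d k R (i + 1)) :=
  if_neg hi

namespace RelayParams

variable (h : RelayParams n d k R)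
include h

theorem three_le : 3 ≤ n := by
  obtain ⟨hk, hd, hR, -, hn⟩ := h
  omega

theorem relayPos_mem_Icc (s : ℕ) {i : ℕ} (hi : i < d) : relayPos n d k R s i ∈ Set.Icc 1 n := by
  have := relayStart_le (d := d) (k := k) (R := R) (i + 1)
  obtain ⟨hk, hd, hR, -, hn⟩ := h
  rcases eq_or_ne i 0 with rfl | hi0
  · rw [relayPos_zero]; constructor <;> omega
  · rw [relayPos_of_ne_zero s hi0]; constructor <;> omega

theorem relayPos_injective {s i j : ℕ} (hi : i < d) (hj : j < d)
    (hs : s < R ∨ n = min k R + d + R) (hij : relayPos n d k R s i = relayPos n d k R s j) :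
    i = j := by
  wlog hlt : i < j generalizing i j
  · rcases (not_lt.1 hlt).eq_or_lt with rfl | hlt
    · rfl
    · exact (this hj hi hij.symm hlt).symm
  have hjR := relayStart_le (d := d) (k := k) (R := R) (j + 1)
  rw [relayPos_of_ne_zero (i := j) s (by omega)] at hij
  rcases eq_or_ne i 0 with rfl | hi0
  · rw [relayPos_zero] at hij
    obtain ⟨hk, hd, hR, -, hn⟩ := h
    rcases hs with hs | hs
    · rcases hn with hn | ⟨hRk, hn⟩
      · omega
      · rw [relayStart_eq_zero_of_le hj hRk] at hij
        omega
    · omega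
  · rw [relayPos_of_ne_zero s hi0] at hij
    have := relayStart_mono (d := d) (k := k) (R := R) (show i + 1 ≤ j from hlt)
    have := relayStart_mono (d := d) (k := k) (R := R) (show j ≤ j + 1 by omega)
    omega

variable [NeZero n]

theorem relayPlay_eq_iff {s s' : ℕ} {i j : Fin d} :
    relayPlay n d k R s i = relayPlay n d k R s' j ↔
      relayPos n d k R s i = relayPos n d k R s' j :=
  natCast_injOn_Icc.eq_iff (h.relayPos_mem_Icc s i.2) (h.relayPos_mem_Icc s' j.2)

theorem eq_of_relayPlay_eq {s : ℕ} (hs : s < R ∨ n = min k R + d + R) (i : Fin d) :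
    ∀ j, relayPlay n d k R s j = relayPlay n d k R s i → j = i := fun j hj =>
  Fin.ext (h.relayPos_injective j.2 i.2 hs (h.relayPlay_eq_iff.1 hj))

theorem mem_protectedSet_relayPlay {s w : ℕ} (hw : w ∈ Set.Icc 1 n) :
    (w : Fin n) ∈ protectedSet (relayPlay n d k R) s ↔
      n - min s (min k R) ≤ w ∨ RelayCovered d k R s w := by
  rw [protectedSet_relayPlay, natCast_injOn_Icc.mem_image_iff
    (by rintro _ ⟨i, hi, s', -, rfl⟩; exact h.relayPos_mem_Icc s' hi) hw]
  obtain ⟨hk, hd, hR, hRd, hn⟩ := h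
  obtain ⟨hw1, hw2⟩ := hw
  constructor
  · rintro ⟨i, hi, s', hs', rfl⟩
    rcases eq_or_ne i 0 with rfl | hi0
    · left
      rw [relayPos_zero]
      omega
    · right
      have := relayStart_mono (d := d) (k := k) (R := R) (show i ≤ i + 1 by omega)
      rw [relayPos_of_ne_zero s' hi0]
      exact ⟨i, by omega, hi, by omega, by omega⟩
  · rintro (hw' | ⟨j, hj1, hjd, hlo, hhi⟩)
    · exact ⟨0, by omega, n - w, by omega, by rw [relayPos_zero]; omega⟩
    · refine ⟨j, hjd, min s (w - j), min_le_left _ _, ?_⟩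
      rw [relayPos_of_ne_zero _ (by omega)]
      omega

local notation "ρ" => relayPlay n d k R

theorem movesBefore_relayPlay_zero {i : Fin d} (hi0 : i.val = 0) (s : ℕ) :
    movesBefore ρ i s = min s (min k R) := by
  refine (movesBefore_eq_of_forall_moves_iff (b := 0) (L := min k R) (fun s' => ?_) s).trans
    (by omega)
  rw [Ne, h.relayPlay_eq_iff, hi0, relayPos_zero, relayPos_zero]
  obtain ⟨hk, hd, hR, hRd, hn⟩ := h
  omega

theorem movesBefore_relayPlay_of_ne_zero {i : Fin d} (hi0 : i.val ≠ 0) (s : ℕ) :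
    movesBefore ρ i s =
      min (s - relayStart d k R i) (relayStart d k R (i + 1) - relayStart d k R i) := by
  have := relayStart_mono (d := d) (k := k) (R := R) (show i.val ≤ i + 1 by omega)
  refine movesBefore_eq_of_forall_moves_iff (fun s' => ?_) s
  rw [Ne, h.relayPlay_eq_iff, relayPos_of_ne_zero _ hi0, relayPos_of_ne_zero _ hi0]
  omega

theorem movesBefore_relayPlay_le (i : Fin d) (s : ℕ) : movesBefore ρ i s ≤ k := by
  rcases eq_or_ne i.val 0 with hi0 | hi0
  · rw [h.movesBefore_relayPlay_zero hi0]
    omega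
  · rw [h.movesBefore_relayPlay_of_ne_zero hi0]
    have := (relayStart_succ (d := d) (k := k) (R := R) i.2).1
    omega

theorem relayPlay_sub_one (s : ℕ) (i : Fin d) :
    ρ s i - 1 = ((relayPos n d k R s i - 1 : ℕ) : Fin n) := by
  rw [Nat.cast_pred (h.relayPos_mem_Icc s i.2).1]; rfl

theorem relayPlay_succ_of_le {s : ℕ} (hs : R ≤ s) : ρ (s + 1) = ρ s := by
  funext i
  refine h.relayPlay_eq_iff.2 ?_
  have := relayStart_le (d := d) (k := k) (R := R) (i + 1)
  rcases eq_or_ne i.val 0 with hi0 | hi0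
  · rw [hi0, relayPos_zero, relayPos_zero]
    omega
  · rw [relayPos_of_ne_zero _ hi0, relayPos_of_ne_zero _ hi0]
    omega

theorem forall_stay_of_stay {s : ℕ} {i : Fin d} (hstay : ρ (s + 1) i = ρ s i) :
    ∀ j, ρ s j = ρ s i → ρ (s + 1) j = ρ s j := by
  intro j hj
  rcases lt_or_ge s R with hs | hs
  · rw [h.eq_of_relayPlay_eq (Or.inl hs) i j hj, hstay]
  · rw [h.relayPlay_succ_of_le hs]

theorem natCast_zero_mem_protectedSet (s : ℕ) : ((0 : ℕ) : Fin n) ∈ protectedSet ρ s :=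
  ⟨⟨0, by have := h.two_le_d; omega⟩, 0, Nat.zero_le s, by
    simp [relayPlay, relayPos_zero]⟩

theorem mem_protectedSet_of_le {s : ℕ} (hs : R ≤ s) (v : Fin n) : v ∈ protectedSet ρ s := by
  obtain ⟨w, hw, rfl⟩ := exists_natCast_eq v
  rw [h.mem_protectedSet_relayPlay hw]
  have hd := h.two_le_d
  by_cases hwR : w ≤ d - 1 + R
  · refine Or.inr (relayCovered_of_le h.R_le (i := d - 1) (by omega) ((relayStart_le _).trans hs)
      hw.1 ?_)
    rw [Nat.sub_add_cancel (by omega), relayStart_self]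
    omega
  · obtain ⟨hk, -, hR, -, hn⟩ := h
    omega

theorem obeysRuleAt_of_le {s : ℕ} (hs : R ≤ s) (v : Fin n) :
    ObeysRuleAt (cycleGraph n) k ρ s v :=
  obeysRuleAt_of_forall_adj_protected (fun w _ => h.mem_protectedSet_of_le hs w)
    fun j _ => by rw [h.relayPlay_succ_of_le hs]

theorem obeysRuleAt_zero_of_lt {s : ℕ} (hs : s < min k R) {i : Fin d} (hi0 : i.val = 0) :
    ObeysRuleAt (cycleGraph n) k ρ s (ρ s i) := by
  have ⟨hk, hd, hR, hRd, hn⟩ := h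
  have hpos : ∀ s', relayPos n d k R s' i = n - min s' (min k R) := fun s' => by
    rw [hi0, relayPos_zero]
  refine obeysRuleAt_cycleGraph_move_sub_one (by omega)
    (h.eq_of_relayPlay_eq (Or.inl (by omega)) i)
    (by rw [h.movesBefore_relayPlay_zero hi0]; omega) ?_ ?_ ?_
  · rw [h.relayPlay_sub_one, hpos, h.mem_protectedSet_relayPlay ⟨by omega, by omega⟩]
    rintro (hle | hcov)
    · omega
    · have := le_of_relayCovered hcov
      rcases hn with hn | ⟨hRk, hn⟩
      · omega
      · rw [relayStart_sub_one (by omega)] at this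
        omega
  · rcases Nat.eq_zero_or_pos s with rfl | hs0
    · refine ⟨⟨1, by omega⟩, 0, le_rfl, ?_⟩
      rw [relayPlay_add_one, hpos]
      simp [relayPlay, relayPos_of_ne_zero, relayStart_one hRd]
    · refine ⟨i, s - 1, by omega, ?_⟩
      rw [relayPlay_add_one]
      exact congrArg Nat.cast (by rw [hpos, hpos]; omega)
  · rw [h.relayPlay_sub_one]
    exact congrArg Nat.cast (by rw [hpos, hpos]; omega)

theorem obeysRuleAt_zero_of_le {s : ℕ} (hs : min k R ≤ s) (hsR : s < R) {i : Fin d}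
    (hi0 : i.val = 0) : ObeysRuleAt (cycleGraph n) k ρ s (ρ s i) := by
  have ⟨hk, hd, hR, hRd, hn⟩ := h
  have hpos : ∀ s', relayPos n d k R s' i = n - min s' (min k R) := fun s' => by
    rw [hi0, relayPos_zero]
  refine obeysRuleAt_cycleGraph_stay h.three_le (h.eq_of_relayPlay_eq (Or.inl hsR) i)
    (h.relayPlay_eq_iff.2 (by rw [hpos, hpos]; omega)) (Or.inl ?_)
  rw [h.movesBefore_relayPlay_zero hi0]
  omega

/-- A relay searcher waiting for its predecessor sees two unprotected neighbours. -/
theorem obeysRuleAt_of_lt_relayStart {s : ℕ} {i : Fin d} (hi0 : i.val ≠ 0)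
    (hs : s < relayStart d k R i) :
    ObeysRuleAt (cycleGraph n) k ρ s (ρ s i) := by
  have ⟨hk, hd, hR, hRd, hn⟩ := h
  have hpos : relayPos n d k R s i = i + relayStart d k R i := by
    rw [relayPos_of_ne_zero _ hi0]
    have := relayStart_mono (d := d) (k := k) (R := R) (show i.val ≤ i + 1 by omega)
    omega
  have hkR : k < R := by
    have := relayStart_mono (d := d) (k := k) (R := R) (show i.val ≤ d - 1 by omega)
    rw [relayStart_sub_one (by omega)] at this
    omega
  have hi2 : 2 ≤ i.val := by
    by_contra
    rw [show i.val = 1 by omega, relayStart_one hRd] at hs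
    omega
  have hnext := (relayStart_succ (d := d) (k := k) (R := R) i.2).2 (by omega)
  have hpred : relayStart d k R (i - 1 + 1) = relayStart d k R i := by
    rw [Nat.sub_add_cancel (by omega)]
  have hprev := relayStart_succ (d := d) (k := k) (R := R) (show i.val - 1 < d by omega)
  rw [hpred] at hprev
  have hiR := relayStart_le (d := d) (k := k) (R := R) (i + 1)
  refine obeysRuleAt_cycleGraph_stay h.three_le (h.eq_of_relayPlay_eq (Or.inl (by omega)) i)
    (h.relayPlay_eq_iff.2 (by rw [hpos, relayPos_of_ne_zero _ hi0]; omega)) (Or.inr ⟨?_, ?_⟩)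
  · rw [h.relayPlay_sub_one, hpos, h.mem_protectedSet_relayPlay ⟨by omega, by omega⟩,
      relayCovered_iff_of_mem_arc (j := i - 1) (by omega) (by omega) (by omega)
        (by rw [hpred]; omega)]
    omega
  · rw [relayPlay_add_one, hpos, h.mem_protectedSet_relayPlay ⟨by omega, by omega⟩,
      relayCovered_iff_of_mem_arc (j := i) (by omega) i.2 (by omega) (by omega)]
    omega

theorem obeysRuleAt_of_relayStart_le_of_lt {s : ℕ} {i : Fin d} (hi0 : i.val ≠ 0)
    (hs₁ : relayStart d k R i ≤ s) (hs₂ : s < relayStart d k R (i + 1)) :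
    ObeysRuleAt (cycleGraph n) k ρ s (ρ s i) := by
  have ⟨hk, hd, hR, hRd, hn⟩ := h
  have hpos : ∀ s', s' ≤ relayStart d k R (i + 1) → relayStart d k R i ≤ s' →
      relayPos n d k R s' i = i + s' := fun s' h₁ h₂ => by
    rw [relayPos_of_ne_zero _ hi0]; omega
  have hiR := relayStart_le (d := d) (k := k) (R := R) (i + 1)
  have hstep := (relayStart_succ (d := d) (k := k) (R := R) i.2).1
  refine obeysRuleAt_cycleGraph_move_add_one (by omega)
    (h.eq_of_relayPlay_eq (Or.inl (by omega)) i)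
    (by rw [h.movesBefore_relayPlay_of_ne_zero hi0]; omega) ?_ ?_ ?_
  · rw [h.relayPlay_sub_one, hpos s hs₂.le hs₁]
    rcases Nat.eq_zero_or_pos (i + s - 1) with h0 | h0
    · rw [h0]
      exact h.natCast_zero_mem_protectedSet s
    · rw [h.mem_protectedSet_relayPlay ⟨h0, by omega⟩]
      exact Or.inr (relayCovered_of_le hRd i.2 hs₁ h0 (by omega))
  · have hbound : i + s + 1 < n - min s (min k R) := by
      rcases hn with hn | ⟨hRk, hn⟩
      · omega
      · have hid : i.val + 1 = d := by
          by_contra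
          rw [relayStart_eq_zero_of_le (show i.val + 1 < d by omega) hRk] at hs₂
          omega
        rw [hid, relayStart_self] at hs₂
        omega
    rw [relayPlay_add_one, hpos s hs₂.le hs₁, h.mem_protectedSet_relayPlay ⟨by omega, by omega⟩,
      relayCovered_iff_of_mem_arc (j := i) (by omega) i.2 (by omega) (by omega)]
    omega
  · rw [relayPlay_add_one]
    exact congrArg Nat.cast (by rw [hpos s hs₂.le hs₁, hpos (s + 1) hs₂ (by omega)]; omega)

theorem obeysRuleAt_of_relayStart_succ_le {s : ℕ} {i : Fin d} (hi0 : i.val ≠ 0)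
    (hs : relayStart d k R (i + 1) ≤ s) (hsR : s < R) :
    ObeysRuleAt (cycleGraph n) k ρ s (ρ s i) := by
  have ⟨hk, hd, hR, hRd, hn⟩ := h
  have hpos : ∀ s', relayStart d k R (i + 1) ≤ s' →
      relayPos n d k R s' i = i + relayStart d k R (i + 1) := fun s' h₁ => by
    rw [relayPos_of_ne_zero _ hi0]; omega
  have hmono := relayStart_mono (d := d) (k := k) (R := R) (show i.val ≤ i + 1 by omega)
  have hmono' := relayStart_mono (d := d) (k := k) (R := R) (show i.val + 1 ≤ i + 1 + 1 by omega)
  have hid : i.val + 1 < d := by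
    by_contra
    rw [show i.val + 1 = d by omega, relayStart_self] at hs
    omega
  have hiR := relayStart_le (d := d) (k := k) (R := R) (i + 1)
  refine obeysRuleAt_cycleGraph_of_protected (by omega) ?_ ?_
    (h.forall_stay_of_stay (h.relayPlay_eq_iff.2 (by rw [hpos s hs, hpos (s + 1) (by omega)])))
  · rw [h.relayPlay_sub_one, hpos s hs]
    rcases Nat.eq_zero_or_pos (i + relayStart d k R (i + 1) - 1) with h0 | h0
    · rw [h0]
      exact h.natCast_zero_mem_protectedSet s
    · rw [h.mem_protectedSet_relayPlay ⟨h0, by omega⟩]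
      exact Or.inr (relayCovered_of_le hRd i.2 (by omega) h0 (by omega))
  · rw [relayPlay_add_one, hpos s hs, h.mem_protectedSet_relayPlay ⟨by omega, by omega⟩]
    exact Or.inr (relayCovered_of_le hRd hid hs (by omega) (by omega))

theorem obeysRuleAt_relayPlay (s : ℕ) (v : Fin n) : ObeysRuleAt (cycleGraph n) k ρ s v := by
  rcases le_or_gt R s with hsR | hsR
  · exact h.obeysRuleAt_of_le hsR v
  by_cases hv : ∃ i, ρ s i = v
  · obtain ⟨i, rfl⟩ := hv
    rcases eq_or_ne i.val 0 with hi0 | hi0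
    · rcases lt_or_ge s (min k R) with hs | hs
      · exact h.obeysRuleAt_zero_of_lt hs hi0
      · exact h.obeysRuleAt_zero_of_le hs hsR hi0
    · rcases lt_or_ge s (relayStart d k R i) with hs₁ | hs₁
      · exact h.obeysRuleAt_of_lt_relayStart hi0 hs₁
      rcases lt_or_ge s (relayStart d k R (i + 1)) with hs₂ | hs₂
      · exact h.obeysRuleAt_of_relayStart_le_of_lt hi0 hs₁ hs₂
      · exact h.obeysRuleAt_of_relayStart_succ_le hi0 hs₂ hsR
  · exact obeysRuleAt_of_unoccupied fun i hi => hv ⟨i, hi⟩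

theorem relayPlay_succ_eq_or_adj (i : Fin d) (s : ℕ) :
    ρ (s + 1) i = ρ s i ∨ (cycleGraph n).Adj (ρ s i) (ρ (s + 1) i) := by
  have ⟨hk, hd, hR, hRd, hn⟩ := h
  have hpos : relayPos n d k R (s + 1) i = relayPos n d k R s i ∨
      relayPos n d k R (s + 1) i + 1 = relayPos n d k R s i ∨
      relayPos n d k R (s + 1) i = relayPos n d k R s i + 1 := by
    rcases eq_or_ne i.val 0 with hi0 | hi0
    · rw [hi0, relayPos_zero, relayPos_zero]
      omega
    · rw [relayPos_of_ne_zero _ hi0, relayPos_of_ne_zero _ hi0]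
      omega
  rw [cycleGraph_adj_iff (by omega)]
  rcases hpos with hpos | hpos | hpos
  · exact Or.inl (congrArg Nat.cast hpos)
  · refine Or.inr (Or.inl (eq_sub_of_add_eq ?_))
    rw [relayPlay_add_one, hpos]
    rfl
  · refine Or.inr (Or.inr ?_)
    rw [relayPlay_add_one, ← hpos]
    rfl

theorem successful_relayPlay : Successful (cycleGraph n) k ρ := by
  refine ⟨⟨h.relayPlay_succ_eq_or_adj, h.movesBefore_relayPlay_le, h.obeysRuleAt_relayPlay⟩,
    fun v => ?_⟩
  obtain ⟨i, s, -, hs⟩ := h.mem_protectedSet_of_le le_rfl v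
  exact ⟨i, s, hs⟩

end RelayParams

end RelayPlay

theorem exists_successful_cycleGraph {n d k : ℕ} (hk : 1 ≤ k) (hn : 3 ≤ n) (hd : 2 ≤ d)
    (hnd : n ≤ d * (k + 1)) (hsmall : d = 2 ∨ d + 2 * k ≤ n) :
    ∃ t : ℕ → Fin d → Fin n, Successful (cycleGraph n) k t := by
  have : NeZero n := ⟨by omega⟩
  by_cases hlarge : d + 2 * k ≤ n
  · have hmul : (d - 1) * k + k = d * k := by
      rw [← Nat.succ_mul, Nat.succ_eq_add_one, Nat.sub_add_cancel (by omega)]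
    have hmul' : d * (k + 1) = d * k + d := by ring
    refine ⟨_, RelayParams.successful_relayPlay (R := n - d - k) ⟨hk, hd, by omega, ?_, ?_⟩⟩
    · omega
    · left
      rw [min_eq_left (by omega)]
      omega
  · obtain rfl : d = 2 := hsmall.resolve_right hlarge
    refine ⟨_, RelayParams.successful_relayPlay (R := (n - 1) / 2) ⟨hk, le_rfl, by omega, ?_, ?_⟩⟩
    · norm_num
      omega
    · rw [min_eq_right (by omega)]
      omega

theorem natCeil_div_le_iff (n k d : ℕ) : ⌈(n : ℚ) / (k + 1)⌉₊ ≤ d ↔ n ≤ d * (k + 1) := by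
  rw [Nat.ceil_le, div_le_iff₀ (by positivity)]
  exact_mod_cast Iff.rfl

theorem add_two_mul_le_of_lt {n k c : ℕ} (hc : 3 ≤ c) (hlt : (c - 1) * (k + 1) < n) :
    c + 2 * k ≤ n := by
  obtain ⟨e, rfl⟩ : ∃ e, c = e + 3 := ⟨c - 3, by omega⟩
  rw [show e + 3 - 1 = e + 2 by omega] at hlt
  nlinarith [Nat.zero_le (e * k)]

end Deduction

/-- `d_k(C_n) = max {2, ⌈n / (k+1)⌉}` for `k ≥ 2`, `n ≥ 3`. -/
theorem stmt_11 (k n : ℕ) (hk : 2 ≤ k) (hn : 3 ≤ n) :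
    Deduction.deductionNumber (SimpleGraph.cycleGraph n) k =
      max 2 ⌈(n : ℚ) / (k + 1)⌉₊ := by
  set c := ⌈(n : ℚ) / (k + 1)⌉₊
  have hc : ∀ d, c ≤ d ↔ n ≤ d * (k + 1) := Deduction.natCeil_div_le_iff n k
  have hsmall : max 2 c = 2 ∨ max 2 c + 2 * k ≤ n := by
    rcases le_or_gt c 2 with hc2 | hc3
    · exact Or.inl (max_eq_left hc2)
    · rw [max_eq_right hc3.le]
      exact Or.inr (Deduction.add_two_mul_le_of_lt hc3 (not_le.1 (mt (hc (c - 1)).2 (by omega))))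
  have hsucc := Deduction.exists_successful_cycleGraph (by omega) hn (le_max_left 2 c)
    ((hc _).1 (le_max_right 2 c)) hsmall
  refine le_antisymm (Nat.sInf_le hsucc) (le_csInf ⟨_, hsucc⟩ ?_)
  rintro d ⟨t, ht⟩
  exact max_le ((Deduction.two_le_minDegree_cycleGraph hn).trans
    (Deduction.minDegree_le_of_successful ht))
    ((hc d).2 (by simpa using Deduction.card_le_of_successful ht))
end

section
/- Let k ≥ 1 and let G and H be finite connected graphs of orders m and n respectively. Then d_k(G □ H) ≤ min{m·d_k(H), n·d_k(G)}, where G □ H is the Cartesian product. -/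
/-!
Take a successful layout of `G` with `d` searchers and copy it into each of the `n` fibres
`G × {b}` of `G □ H`, every copy playing only inside its own fibre. A vertex `(v, b)` becomes
protected exactly when `v` does, so whenever searchers sit on `(v, b)` (hence `v` is protected),
all neighbours `(v, c)` in other fibres are already protected and the unprotected neighbours of
`(v, b)` are the copies of those of `v`. Each copy therefore obeys the rules of the game in
`G □ H`, and `n · d` searchers suffice. The bound with the roles of `G` and `H` exchanged is the
same argument with the fibres `{a} × H`.
-/

namespace Deduction

variable {V B X : Type*} {G : SimpleGraph V} {W : SimpleGraph X} {k d n : ℕ}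

theorem mobileOn_eq_empty_of_notMem_protectedSet {t : ℕ → Fin d → V} {s : ℕ} {v : V}
    (hv : v ∉ protectedSet t s) : mobileOn k t s v = ∅ :=
  Set.eq_empty_of_forall_notMem fun i hi => hv ⟨i, s, le_rfl, hi.1⟩

theorem successful_const {f : Fin d → V} (hf : Function.Surjective f) :
    Successful G k fun _ => f := by
  have hunprot (s : ℕ) (v : V) : unprotNbrs G (fun _ => f) s v = ∅ :=
    Set.eq_empty_of_forall_notMem fun u hu =>
      hu.2 <| let ⟨i, hi⟩ := hf u; ⟨i, 0, Nat.zero_le s, hi⟩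
  have hmoves (i : Fin d) (s : ℕ) : movesBefore (fun _ => f) i s = 0 := by
    simp [movesBefore]
  refine ⟨⟨fun _ _ => Or.inl rfl, fun i s => by simp [hmoves], fun s v => ?_⟩,
    fun v => let ⟨i, hi⟩ := hf v; ⟨i, 0, hi⟩⟩
  simp [hunprot]

theorem deductionNumber_le {t : ℕ → Fin d → V} (ht : Successful G k t) :
    deductionNumber G k ≤ d :=
  Nat.sInf_le ⟨t, ht⟩

theorem exists_successful_deductionNumber [Finite V] (G : SimpleGraph V) (k : ℕ) :
    ∃ t : ℕ → Fin (deductionNumber G k) → V, Successful G k t :=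
  Nat.sInf_mem (s := {d | ∃ t : ℕ → Fin d → V, Successful G k t})
    ⟨Nat.card V, _, successful_const (Finite.equivFin V).symm.surjective⟩

/-- Satisfied by `G □ K` for every graph `K` on `B`; it is all that copying a play of `G` into
the fibres `Φ (b, ·)` needs. -/
structure IsFibred (G : SimpleGraph V) (W : SimpleGraph X) (Φ : B × V ≃ X) : Prop where
  adj : ∀ b u v, G.Adj u v → W.Adj (Φ (b, u)) (Φ (b, v))
  eq_or_eq_of_adj : ∀ b c u v, W.Adj (Φ (b, u)) (Φ (c, v)) → b = c ∧ G.Adj u v ∨ u = v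

section BlowUp

variable (Φ : B × V ≃ X) (e : Fin n ≃ B × Fin d) (t : ℕ → Fin d → V)

def blowUp : ℕ → Fin n → X :=
  fun s j => Φ ((e j).1, t s (e j).2)

variable {Φ e t}

theorem blowUp_eq_iff {s : ℕ} {j : Fin n} {b : B} {v : V} :
    blowUp Φ e t s j = Φ (b, v) ↔ (e j).1 = b ∧ t s (e j).2 = v := by
  simp [blowUp]

theorem movesBefore_blowUp (j : Fin n) (s : ℕ) :
    movesBefore (blowUp Φ e t) j s = movesBefore t (e j).2 s := by
  simp [movesBefore, blowUp]

theorem blowUp_mem_protectedSet_iff {s : ℕ} {b : B} {v : V} :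
    Φ (b, v) ∈ protectedSet (blowUp Φ e t) s ↔ v ∈ protectedSet t s := by
  constructor
  · rintro ⟨j, s', hs', hj⟩
    exact ⟨(e j).2, s', hs', (blowUp_eq_iff.1 hj).2⟩
  · rintro ⟨i, s', hs', hi⟩
    exact ⟨e.symm (b, i), s', hs', blowUp_eq_iff.2 (by simpa using hi)⟩

theorem mobileOn_blowUp (s : ℕ) (b : B) (v : V) :
    mobileOn k (blowUp Φ e t) s (Φ (b, v)) =
      (fun i => e.symm (b, i)) '' mobileOn k t s v := by
  ext j
  simp only [mobileOn, Set.mem_ofPred_eq, Set.mem_image, blowUp_eq_iff, movesBefore_blowUp]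
  constructor
  · rintro ⟨⟨rfl, hv⟩, hk⟩
    exact ⟨(e j).2, ⟨hv, hk⟩, by simp⟩
  · rintro ⟨i, hi, rfl⟩
    simpa using hi

theorem unprotNbrs_blowUp (hΦ : IsFibred G W Φ)
    {s : ℕ} {b : B} {v : V} (hv : v ∈ protectedSet t s) :
    unprotNbrs W (blowUp Φ e t) s (Φ (b, v)) = (fun u => Φ (b, u)) '' unprotNbrs G t s v := by
  ext x
  obtain ⟨⟨c, u⟩, rfl⟩ := Φ.surjective x
  simp only [unprotNbrs, Set.mem_ofPred_eq, Set.mem_image, blowUp_mem_protectedSet_iff,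
    Φ.apply_eq_iff_eq, Prod.mk.injEq]
  constructor
  · rintro ⟨hadj, hu⟩
    rcases hΦ.eq_or_eq_of_adj b c v u hadj with ⟨rfl, hvu⟩ | rfl
    · exact ⟨u, ⟨hvu, hu⟩, rfl, rfl⟩
    · exact absurd hv hu
  · rintro ⟨u, ⟨hvu, hu⟩, rfl, rfl⟩
    exact ⟨hΦ.adj b v u hvu, hu⟩

theorem validPlay_blowUp [Finite X] (hΦ : IsFibred G W Φ)
    (ht : ValidPlay G k t) : ValidPlay W k (blowUp Φ e t) := by
  obtain ⟨hstep, hmoves, hrule⟩ := ht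
  refine ⟨fun j s => ?_, fun j s => movesBefore_blowUp j s ▸ hmoves _ _, fun s x => ?_⟩
  · rcases hstep (e j).2 s with h | h
    · exact Or.inl (by simp [blowUp, h])
    · exact Or.inr (hΦ.adj _ _ _ h)
  obtain ⟨⟨b, v⟩, rfl⟩ := Φ.surjective x
  by_cases hv : v ∈ protectedSet t s
  swap
  · -- No searcher stands on the unprotected vertex, so neither rule applies; finiteness of `X`
    -- excludes an infinite neighbourhood, whose `ncard` would be the junk value `0`.
    have hempty : mobileOn k (blowUp Φ e t) s (Φ (b, v)) = ∅ := by
      rw [mobileOn_blowUp, mobileOn_eq_empty_of_notMem_protectedSet hv, Set.image_empty]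
    refine ⟨fun ⟨hne, hle⟩ => ?_,
      fun _ j hj => absurd ⟨(e j).2, s, le_rfl, (blowUp_eq_iff.1 hj).2⟩ hv⟩
    rw [hempty, Set.ncard_empty, Nat.le_zero, Set.ncard_eq_zero (Set.toFinite _)] at hle
    exact absurd hle hne.ne_empty
  have hunprot := unprotNbrs_blowUp (e := e) hΦ (b := b) hv
  have hinj : Function.Injective fun u => Φ (b, u) := fun u u' h => by simpa using h
  have hinj' : Function.Injective fun i => e.symm (b, i) := fun i i' h => by simpa using h
  have hfires :
      ((unprotNbrs W (blowUp Φ e t) s (Φ (b, v))).Nonempty ∧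
        (unprotNbrs W (blowUp Φ e t) s (Φ (b, v))).ncard ≤
          (mobileOn k (blowUp Φ e t) s (Φ (b, v))).ncard) ↔
      ((unprotNbrs G t s v).Nonempty ∧
        (unprotNbrs G t s v).ncard ≤ (mobileOn k t s v).ncard) := by
    rw [hunprot, mobileOn_blowUp, Set.image_nonempty, Set.ncard_image_of_injective _ hinj,
      Set.ncard_image_of_injective _ hinj']
  refine ⟨fun hc => ?_, fun hnc j hj => ?_⟩
  · obtain ⟨hmove, hcover⟩ := (hrule s v).1 (hfires.1 hc)
    rw [hunprot, mobileOn_blowUp]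
    refine ⟨?_, ?_⟩
    · rintro _ ⟨i, hi, rfl⟩
      exact ⟨_, hmove i hi, by simp [blowUp]⟩
    · rintro _ ⟨u, hu, rfl⟩
      obtain ⟨i, hi, rfl⟩ := hcover u hu
      exact ⟨_, ⟨i, hi, rfl⟩, by simp [blowUp]⟩
  · have hstay := (hrule s v).2 (mt hfires.2 hnc) _ (blowUp_eq_iff.1 hj).2
    simp [blowUp, hstay]

theorem successful_blowUp [Finite X] (hΦ : IsFibred G W Φ)
    (ht : Successful G k t) : Successful W k (blowUp Φ e t) := by
  refine ⟨validPlay_blowUp hΦ ht.1, fun x => ?_⟩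
  obtain ⟨⟨b, v⟩, rfl⟩ := Φ.surjective x
  obtain ⟨i, s, hi⟩ := ht.2 v
  exact ⟨e.symm (b, i), s, blowUp_eq_iff.2 (by simpa using hi)⟩

end BlowUp

theorem deductionNumber_le_card_mul [Finite V] [Finite B] (k : ℕ) (Φ : B × V ≃ X) (hΦ : IsFibred G W Φ) :
    deductionNumber W k ≤ Nat.card B * deductionNumber G k := by
  have : Finite X := .of_equiv _ Φ
  obtain ⟨t, ht⟩ := exists_successful_deductionNumber G k
  let e : Fin (Nat.card B * deductionNumber G k) ≃ B × Fin (deductionNumber G k) :=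
    finProdFinEquiv.symm.trans ((Finite.equivFin B).symm.prodCongr (Equiv.refl _))
  exact deductionNumber_le (successful_blowUp (e := e) hΦ ht)

open SimpleGraph

theorem isFibred_boxProd_right {α β : Type*} (G : SimpleGraph α) (H : SimpleGraph β) :
    IsFibred H (G □ H) (Equiv.refl _) where
  adj _ _ _ h := boxProd_adj.2 (Or.inr ⟨h, rfl⟩)
  eq_or_eq_of_adj := by
    rintro a c u v (⟨-, huv⟩ | ⟨huv, hac⟩)
    · exact Or.inr huv
    · exact Or.inl ⟨hac, huv⟩

theorem isFibred_boxProd_left {α β : Type*} (G : SimpleGraph α) (H : SimpleGraph β) :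
    IsFibred G (G □ H) (Equiv.prodComm β α) where
  adj _ _ _ h := boxProd_adj.2 (Or.inl ⟨h, rfl⟩)
  eq_or_eq_of_adj := by
    rintro b c u v (⟨huv, hbc⟩ | ⟨-, huv⟩)
    · exact Or.inl ⟨hbc, huv⟩
    · exact Or.inr huv

end Deduction

open SimpleGraph in
theorem stmt_14_general {α β : Type*} [Fintype α] [Fintype β]
    (G : SimpleGraph α) (H : SimpleGraph β) (k : ℕ) :
    Deduction.deductionNumber (G □ H) k ≤
      min (Fintype.card α * Deduction.deductionNumber H k)
        (Fintype.card β * Deduction.deductionNumber G k) := by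
  rw [← Nat.card_eq_fintype_card, ← Nat.card_eq_fintype_card]
  exact le_min (Deduction.deductionNumber_le_card_mul k _ (Deduction.isFibred_boxProd_right G H))
    (Deduction.deductionNumber_le_card_mul k _ (Deduction.isFibred_boxProd_left G H))

open SimpleGraph in
/-- Product upper bound: `d_k(G □ H) ≤ min {m·d_k(H), n·d_k(G)}`. -/
theorem stmt_14 {α β : Type*} [Fintype α] [Fintype β]
    (G : SimpleGraph α) (H : SimpleGraph β) (k : ℕ) (hk : 1 ≤ k)
    (hG : G.Connected) (hH : H.Connected) :
    Deduction.deductionNumber (G □ H) k ≤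
      min (Fintype.card α * Deduction.deductionNumber H k)
        (Fintype.card β * Deduction.deductionNumber G k) :=
  stmt_14_general G H k
end

section
/- Let k ≥ 1 and let m, n be integers with 2 ≤ m ≤ n ≤ k+1. Then d_k(P_m □ P_n) = m, where P_m □ P_n is the m×n grid graph. -/
namespace Deduction

section Play

variable {V : Type*} {G : SimpleGraph V} {k d : ℕ} {t : ℕ → Fin d → V} {s : ℕ} {i : Fin d}
  {u v : V}

def Fires (G : SimpleGraph V) (k : ℕ) (t : ℕ → Fin d → V) (s : ℕ) (v : V) : Prop :=
  (unprotNbrs G t s v).Nonempty ∧ (unprotNbrs G t s v).ncard ≤ (mobileOn k t s v).ncard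

lemma Fires.nonempty_mobileOn [Finite V] (h : Fires G k t s v) : (mobileOn k t s v).Nonempty :=
  (Set.ncard_pos (Set.toFinite _)).mp
    ((Set.ncard_pos (Set.toFinite _)).mpr h.1 |>.trans_le h.2)

lemma protectedSet_mono (t : ℕ → Fin d → V) : Monotone (protectedSet t) :=
  fun _ _ hss' _ ⟨i, r, hr, he⟩ => ⟨i, r, hr.trans hss', he⟩

lemma mem_protectedSet_self (t : ℕ → Fin d → V) (s : ℕ) (i : Fin d) :
    t s i ∈ protectedSet t s :=
  ⟨i, s, le_rfl, rfl⟩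

lemma mem_protectedSet_succ :
    v ∈ protectedSet t (s + 1) ↔ v ∈ protectedSet t s ∨ ∃ i, t (s + 1) i = v := by
  constructor
  · rintro ⟨i, r, hr, rfl⟩
    rcases Nat.lt_succ_iff_lt_or_eq.mp (Nat.lt_succ_of_le hr) with hr | rfl
    · exact .inl ⟨i, r, Nat.lt_succ_iff.mp hr, rfl⟩
    · exact .inr ⟨i, rfl⟩
  · rintro (hv | ⟨i, rfl⟩)
    exacts [protectedSet_mono t s.le_succ hv, mem_protectedSet_self t _ i]

lemma movesBefore_le (t : ℕ → Fin d → V) (i : Fin d) (s : ℕ) : movesBefore t i s ≤ s := by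
  calc movesBefore t i s ≤ (↑(Finset.range s) : Set ℕ).ncard :=
        Set.ncard_le_ncard (fun r hr => Finset.mem_coe.mpr (Finset.mem_range.mpr hr.1))
    _ = s := by rw [Set.ncard_coe_finset, Finset.card_range]

lemma movesBefore_succ_of_ne (h : t (s + 1) i ≠ t s i) :
    movesBefore t i (s + 1) = movesBefore t i s + 1 := by
  have hset : {r | r < s + 1 ∧ t (r + 1) i ≠ t r i} =
      insert s {r | r < s ∧ t (r + 1) i ≠ t r i} := by
    ext r
    simp only [Set.mem_ofPred_eq, Set.mem_insert_iff]
    constructor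
    · rintro ⟨hr, hne⟩
      rcases Nat.lt_succ_iff_lt_or_eq.mp hr with hr | rfl
      exacts [.inr ⟨hr, hne⟩, .inl rfl]
    · rintro (rfl | ⟨hr, hne⟩)
      exacts [⟨Nat.lt_succ_self _, h⟩, ⟨hr.trans (Nat.lt_succ_self s), hne⟩]
  rw [movesBefore, hset, Set.ncard_insert_of_notMem (fun hs => (lt_irrefl s hs.1))
    ((Set.finite_Iio s).subset fun r hr => hr.1)]
  rfl

lemma ValidPlay.fires_of_ne (hv : ValidPlay G k t) (h : t (s + 1) i ≠ t s i) :
    Fires G k t s (t s i) ∧ t (s + 1) i ∈ unprotNbrs G t s (t s i) := by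
  obtain ⟨-, hk, hrule⟩ := hv
  by_cases hc : Fires G k t s (t s i)
  · have hmobile : i ∈ mobileOn k t s (t s i) := by
      refine ⟨rfl, ?_⟩
      have := hk i (s + 1)
      rw [movesBefore_succ_of_ne h] at this
      omega
    exact ⟨hc, ((hrule s _).1 hc).1 i hmobile⟩
  · exact absurd ((hrule s _).2 hc i rfl) h

lemma ValidPlay.mem_protectedSet_succ_of_ne (hv : ValidPlay G k t) (h : t (s + 1) i ≠ t s i)
    (hadj : G.Adj (t s i) u) : u ∈ protectedSet t (s + 1) := by
  by_cases hu : u ∈ protectedSet t s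
  · exact protectedSet_mono t s.le_succ hu
  · obtain ⟨j, -, hj⟩ := ((hv.2.2 s _).1 (hv.fires_of_ne h).1).2 u ⟨hadj, hu⟩
    exact hj ▸ mem_protectedSet_self t _ j

/-- A searcher leaving `v` protects every neighbour of `v`, so the searcher that protected `v`
has not left while `v` has an unprotected neighbour. -/
lemma ValidPlay.exists_eq_of_adj_of_notMem (hv : ValidPlay G k t) (hvS : v ∈ protectedSet t s)
    (hadj : G.Adj v u) (hu : u ∉ protectedSet t s) : ∃ i, t s i = v := by
  obtain ⟨i, r, hr, hri⟩ := hvS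
  refine ⟨i, ?_⟩
  induction s, hr using Nat.le_induction with
  | base => exact hri
  | succ s hrs ih =>
    have his : t s i = v := ih fun hu' => hu (protectedSet_mono t s.le_succ hu')
    by_contra h
    exact hu (hv.mem_protectedSet_succ_of_ne (his ▸ h) (his ▸ hadj))

lemma ValidPlay.exists_fires_of_mem_succ (hv : ValidPlay G k t)
    (h₁ : v ∈ protectedSet t (s + 1)) (h₂ : v ∉ protectedSet t s) :
    ∃ i, t (s + 1) i = v ∧ G.Adj (t s i) v ∧ Fires G k t s (t s i) := by
  obtain ⟨i, rfl⟩ := (mem_protectedSet_succ.mp h₁).resolve_left h₂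
  have hne : t (s + 1) i ≠ t s i := fun h => h₂ (h ▸ mem_protectedSet_self t s i)
  obtain ⟨hfire, hadj, -⟩ := hv.fires_of_ne hne
  exact ⟨i, rfl, hadj, hfire⟩

lemma Successful.exists_forall_mem_protectedSet [Finite V] (ht : Successful G k t) :
    ∃ s, ∀ v, v ∈ protectedSet t s := by
  choose i r hr using ht.2
  obtain ⟨N, hN⟩ := (Set.finite_range r).bddAbove
  exact ⟨N, fun v => ⟨i v, r v, hN ⟨v, rfl⟩, hr v⟩⟩

section Map

variable {W : Type*} {G' : SimpleGraph W} (e : G ≃g G')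

lemma movesBefore_map (i : Fin d) (s : ℕ) :
    movesBefore (fun s i => e (t s i)) i s = movesBefore t i s := by
  simp only [movesBefore, ne_eq, EmbeddingLike.apply_eq_iff_eq]

lemma mem_protectedSet_map :
    e v ∈ protectedSet (fun s i => e (t s i)) s ↔ v ∈ protectedSet t s := by
  simp only [protectedSet, Set.mem_ofPred_eq, EmbeddingLike.apply_eq_iff_eq]

lemma unprotNbrs_map :
    unprotNbrs G' (fun s i => e (t s i)) s (e v) = e '' unprotNbrs G t s v := by
  ext u
  obtain ⟨u, rfl⟩ := e.surjective u
  simp [unprotNbrs, mem_protectedSet_map, e.map_adj_iff]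

lemma mobileOn_map : mobileOn k (fun s i => e (t s i)) s (e v) = mobileOn k t s v := by
  simp [mobileOn, movesBefore_map]

theorem ValidPlay.map (hv : ValidPlay G k t) : ValidPlay G' k (fun s i => e (t s i)) := by
  obtain ⟨hstep, hk, hrule⟩ := hv
  refine ⟨fun i s => ?_, fun i s => movesBefore_map e i s ▸ hk i s, fun s v => ?_⟩
  · simpa only [EmbeddingLike.apply_eq_iff_eq, e.map_adj_iff] using hstep i s
  obtain ⟨v, rfl⟩ := e.surjective v
  rw [unprotNbrs_map, mobileOn_map, Set.image_nonempty,
    Set.ncard_image_of_injective _ e.injective]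
  refine ⟨fun hc => ⟨fun i hi => ⟨_, ((hrule s v).1 hc).1 i hi, rfl⟩, ?_⟩,
    fun hc i hi => ?_⟩
  · rintro _ ⟨u, hu, rfl⟩
    obtain ⟨i, hi, hiu⟩ := ((hrule s v).1 hc).2 u hu
    exact ⟨i, hi, congrArg e hiu⟩
  · exact congrArg e ((hrule s v).2 hc i (e.injective hi))

end Map

end Play

section BoxProd

open SimpleGraph Finset
open scoped Classical

variable {α β : Type*} {G : SimpleGraph α} {H : SimpleGraph β} {k d : ℕ}
  {t : ℕ → Fin d → α × β} {s : ℕ} {a : α} {b : β}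

def RowFull (t : ℕ → Fin d → α × β) (s : ℕ) (a : α) : Prop :=
  ∀ b, (a, b) ∈ protectedSet t s

/-- The play read on `H □ G`: the rows of `swapPlay t` are the columns of `t`. -/
def swapPlay (t : ℕ → Fin d → α × β) : ℕ → Fin d → β × α :=
  fun s i => (t s i).swap

lemma mem_protectedSet_swapPlay :
    (b, a) ∈ protectedSet (swapPlay t) s ↔ (a, b) ∈ protectedSet t s := by
  simp only [protectedSet, swapPlay, Set.mem_ofPred_eq, Prod.swap_eq_iff_eq_swap,
    Prod.swap_prod_mk]

lemma ValidPlay.swap (hv : ValidPlay (G □ H) k t) : ValidPlay (H □ G) k (swapPlay t) :=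
  hv.map (boxProdComm G H)

lemma ValidPlay.exists_fst_eq_of_not_rowFull (hv : ValidPlay (G □ H) k t) (hH : H.Connected)
    (hb : (a, b) ∈ protectedSet t s) (ha : ¬ RowFull t s a) : ∃ i, (t s i).1 = a := by
  obtain ⟨b', hb'⟩ := not_forall.mp ha
  obtain ⟨w⟩ := hH.preconnected b b'
  obtain ⟨⟨⟨c, c'⟩, hcc'⟩, -, hc, hc'⟩ :=
    w.exists_boundary_dart {c | (a, c) ∈ protectedSet t s} hb hb'
  obtain ⟨i, hi⟩ := hv.exists_eq_of_adj_of_notMem hc (boxProd_adj_right.mpr hcc') hc'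
  exact ⟨i, by rw [hi]⟩

lemma card_le_of_rowFull_zero [Fintype β] (ha : RowFull t 0 a) : Fintype.card β ≤ d := by
  have hsurj : Function.Surjective fun i => (t 0 i).2 := fun b => by
    obtain ⟨i, r, hr, hi⟩ := ha b
    obtain rfl := Nat.le_zero.mp hr
    exact ⟨i, congrArg Prod.snd hi⟩
  simpa using Fintype.card_le_of_surjective _ hsurj

lemma ValidPlay.exists_rowFull_swapPlay [Fintype β] (hv : ValidPlay (G □ H) k t)
    (hG : G.Connected) (hd : d < Fintype.card β) (ha : RowFull t s a) :
    ∃ b, RowFull (swapPlay t) s b := by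
  by_contra! h
  have hsurj : Function.Surjective fun i => (t s i).2 := fun b =>
    hv.swap.exists_fst_eq_of_not_rowFull hG (mem_protectedSet_swapPlay.mpr (ha b)) (h b)
  exact hd.not_ge (by simpa using Fintype.card_le_of_surjective _ hsurj)

lemma card_add_card_filter_mem_le {γ : Type*} (f : Fin d → γ) {A : Finset γ}
    (hA : ∀ c ∈ A, ∃ i, f i = c) (T : Finset γ) : #A + #{i | f i ∈ T} ≤ d + #T := by
  have hsdiff : #(A \ T) ≤ #{i | f i ∉ T} := card_le_card_of_surjOn f fun c hc => by
    obtain ⟨hcA, hcT⟩ := mem_sdiff.mp hc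
    obtain ⟨i, rfl⟩ := hA c hcA
    exact ⟨i, by simpa using hcT, rfl⟩
  have hsplit := card_filter_add_card_filter_not (s := univ) fun i => f i ∈ T
  have hA' := card_le_card_sdiff_add_card (s := A) (t := T)
  simp only [card_univ, Fintype.card_fin] at hsplit
  omega

/-- The searcher that fires from a row next to an empty row is not alone in its row: it has
two unprotected neighbours, unless its neighbour along the row is protected, and then that
neighbour still holds a searcher. -/
lemma ValidPlay.exists_ne_fst_eq [Finite α] [Finite β] [Nontrivial β]
    (hv : ValidPlay (G □ H) k t) (hH : H.Connected) {a' a'' : α} {c : β} {i : Fin d}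
    (hempty : ∀ b, (a'', b) ∉ protectedSet t s) (hi : t s i = (a', c)) (hadj : G.Adj a' a'')
    (hfire : Fires (G □ H) k t s (a', c)) : ∃ j ≠ i, (t s j).1 = a' := by
  obtain ⟨c', hcc'⟩ := hH.preconnected.exists_adj_of_nontrivial c
  by_cases hc' : (a', c') ∈ protectedSet t s
  · obtain ⟨j, hj⟩ := hv.exists_eq_of_adj_of_notMem hc' (boxProd_adj_left.mpr hadj) (hempty c')
    refine ⟨j, ?_, by rw [hj]⟩
    rintro rfl
    exact hcc'.ne (congrArg Prod.snd (hi.symm.trans hj))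
  · have hpair : {(a'', c), (a', c')} ⊆ unprotNbrs (G □ H) t s (a', c) := by
      rintro u (rfl | rfl)
      exacts [⟨boxProd_adj_left.mpr hadj, hempty c⟩, ⟨boxProd_adj_right.mpr hcc', hc'⟩]
    have htwo : 1 < (mobileOn k t s (a', c)).ncard := by
      have := Set.ncard_le_ncard hpair
      rw [Set.ncard_pair fun h => hadj.ne (congrArg Prod.fst h).symm] at this
      exact this.trans hfire.2
    obtain ⟨j, hj, hji⟩ := Set.exists_ne_of_one_lt_ncard htwo i
    exact ⟨j, hji, by rw [hj.1]⟩

section Count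

variable [Fintype α] [Fintype β]

/-- An empty column `b` enters the full row `a` through a searcher moving along row `a` into
`(a, b)`. -/
lemma ValidPlay.card_emptyCols_le (hv : ValidPlay (G □ H) k t)
    (ha : RowFull t (s + 1) a) :
    #{b | ¬ ∃ a, (a, b) ∈ protectedSet t s} ≤
      #{i | (t s i).1 = a ∧ (t (s + 1) i).1 = a} := by
  refine card_le_card_of_surjOn (fun i => (t (s + 1) i).2) fun b hb => ?_
  simp only [coe_filter, mem_univ, true_and, Set.mem_ofPred_eq, not_exists] at hb
  obtain ⟨i, hi, hadj, -⟩ := hv.exists_fires_of_mem_succ (ha b) (hb a)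
  refine ⟨i, ?_, by simp [hi]⟩
  rcases boxProd_adj.mp hadj with ⟨-, hcol⟩ | ⟨-, hrow⟩
  · have hcell : t s i = ((t s i).1, b) := Prod.ext rfl (by rw [hcol])
    exact absurd (hcell ▸ mem_protectedSet_self t s i) (hb _)
  · simp [hrow, hi]

lemma ValidPlay.exists_fst_eq_of_forall_not_rowFull (hv : ValidPlay (G □ H) k t)
    (hH : H.Connected) (hnf : ∀ a, ¬ RowFull t s a) :
    ∀ a ∈ ({a | ∃ b, (a, b) ∈ protectedSet t s} : Finset α), ∃ i, (t s i).1 = a := by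
  intro a ha
  obtain ⟨b, hb⟩ := (mem_filter.mp ha).2
  exact hv.exists_fst_eq_of_not_rowFull hH hb (hnf a)

lemma ValidPlay.card_nonemptyRows_add_card_emptyCols_le_succ (hv : ValidPlay (G □ H) k t)
    (hH : H.Connected) (hnf : ∀ a, ¬ RowFull t s a) (ha : RowFull t (s + 1) a) :
    #{a | ∃ b, (a, b) ∈ protectedSet t s} + #{b | ¬ ∃ a, (a, b) ∈ protectedSet t s} ≤
      d + 1 := by
  have hcount := card_add_card_filter_mem_le _ (hv.exists_fst_eq_of_forall_not_rowFull hH hnf) {a}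
  have hmovers : #{i | (t s i).1 = a ∧ (t (s + 1) i).1 = a} ≤
      #{i | (t s i).1 ∈ ({a} : Finset α)} :=
    card_le_card fun i hi => by simpa using (mem_filter.mp hi).2.1
  have := hv.card_emptyCols_le ha
  rw [card_singleton] at hcount
  omega

lemma ValidPlay.card_nonemptyRows_add_card_emptyCols_le [Nontrivial β]
    (hv : ValidPlay (G □ H) k t)
    (hH : H.Connected) (hnf : ∀ a, ¬ RowFull t s a) (ha : RowFull t (s + 1) a)
    {c : β} (hc : RowFull (swapPlay t) (s + 1) c) {a'' : α}
    (hempty : ∀ b, (a'', b) ∉ protectedSet t s) :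
    #{a | ∃ b, (a, b) ∈ protectedSet t s} + #{b | ¬ ∃ a, (a, b) ∈ protectedSet t s} ≤
      d := by
  obtain ⟨i, hi, hadj, hfire⟩ :=
    hv.exists_fires_of_mem_succ (mem_protectedSet_swapPlay.mp (hc a'')) (hempty c)
  obtain ⟨a', hia', ha'⟩ : ∃ a', t s i = (a', c) ∧ G.Adj a' a'' := by
    rcases boxProd_adj.mp hadj with ⟨hcol, hrow⟩ | ⟨-, hrow⟩
    · exact ⟨_, Prod.ext rfl hrow, hcol⟩
    · have hcell : t s i = (a'', (t s i).2) := Prod.ext hrow rfl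
      exact absurd (hcell ▸ mem_protectedSet_self t s i) (hempty _)
  obtain ⟨j, hji, hj⟩ := hv.exists_ne_fst_eq hH hempty hia' ha' (hia' ▸ hfire)
  set M : Finset (Fin d) := {i | (t s i).1 = a ∧ (t (s + 1) i).1 = a}
  have hrowM : ∀ i ∈ M, (t s i).1 = a := fun i hi => (mem_filter.mp hi).2.1
  -- `i` and `j` lie in row `a'` outside the movers `M` of row `a` (only `i` when `a' = a`).
  have hextra : #M + #{a, a'} ≤ #{i | (t s i).1 ∈ ({a, a'} : Finset α)} := by
    by_cases ha'a : a' = a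
    · subst ha'a
      have hiM : i ∉ M := fun h => ha'.ne <| by
        rw [← (mem_filter.mp h).2.2, hi]
      calc #M + #{a', a'} = #(insert i M) := by simp [card_insert_of_notMem hiM]
        _ ≤ _ := card_le_card <| insert_subset (by simp [hia']) fun i hi => by
          simp [hrowM i hi]
    · have hdisj : Disjoint M {i, j} := disjoint_left.mpr fun l hl hl' => ha'a <| by
        rcases mem_insert.mp hl' with rfl | hl'
        · rw [← hrowM l hl, hia']
        · rw [← hrowM l hl, ← hj, mem_singleton.mp hl']
      calc #M + #{a, a'} = #(M ∪ {i, j}) := by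
            rw [card_union_of_disjoint hdisj, card_pair (Ne.symm ha'a), card_pair hji.symm]
        _ ≤ _ := card_le_card <| union_subset (fun i hi => by simp [hrowM i hi])
          (insert_subset (by simp [hia']) (by simp [hj]))
  have hcount := card_add_card_filter_mem_le _ (hv.exists_fst_eq_of_forall_not_rowFull hH hnf)
    {a, a'}
  have hM : #{b | ¬ ∃ a, (a, b) ∈ protectedSet t s} ≤ #M := hv.card_emptyCols_le ha
  omega

theorem card_le_of_successful_boxProd [Nontrivial β] (hG : G.Connected) (hH : H.Connected)
    (hcard : Fintype.card α ≤ Fintype.card β) (ht : Successful (G □ H) k t) :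
    Fintype.card α ≤ d := by
  by_contra! hd
  have hv := ht.1
  have hex : ∃ s, (∃ a, RowFull t s a) ∨ ∃ b, RowFull (swapPlay t) s b := by
    obtain ⟨s, hs⟩ := ht.exists_forall_mem_protectedSet
    obtain ⟨a⟩ : Nonempty α := Fintype.card_pos_iff.mp (by omega)
    exact ⟨s, .inl ⟨a, fun b => hs _⟩⟩
  obtain ⟨a, ha⟩ : ∃ a, RowFull t (Nat.find hex) a :=
    (Nat.find_spec hex).elim id fun ⟨_, hb⟩ =>
      hv.swap.exists_rowFull_swapPlay hH (hd.trans_le le_rfl) hb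
  obtain ⟨c, hc⟩ := hv.exists_rowFull_swapPlay hG (hd.trans_le hcard) ha
  obtain ⟨s, hs⟩ : ∃ s, Nat.find hex = s + 1 :=
    Nat.exists_eq_add_one.mpr <| Nat.pos_of_ne_zero fun h =>
      (card_le_of_rowFull_zero (h ▸ ha)).not_gt (hd.trans_le hcard)
  rw [hs] at ha hc
  obtain ⟨hnr, hnc⟩ : (∀ a, ¬ RowFull t s a) ∧ ∀ b, ¬ RowFull (swapPlay t) s b := by
    simpa only [not_or, not_exists] using Nat.find_min hex (hs ▸ s.lt_succ_self)
  obtain ⟨a'', ha''⟩ : ∃ a'', ∀ b, (a'', b) ∉ protectedSet t s := by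
    by_contra! h
    have hsurj : Function.Surjective fun i => (t s i).1 := fun a => by
      obtain ⟨b, hb⟩ := h a
      exact hv.exists_fst_eq_of_not_rowFull hH hb (hnr a)
    exact hd.not_ge (by simpa using Fintype.card_le_of_surjective _ hsurj)
  have hrows := hv.card_nonemptyRows_add_card_emptyCols_le hH hnr ha hc ha''
  have hcols := hv.swap.card_nonemptyRows_add_card_emptyCols_le_succ hG hnc hc
  simp only [mem_protectedSet_swapPlay] at hcols
  have hα := card_filter_add_card_filter_not (s := univ)
    fun a => ∃ b, (a, b) ∈ protectedSet t s
  have hβ := card_filter_add_card_filter_not (s := univ)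
    fun b => ∃ a, (a, b) ∈ protectedSet t s
  simp only [card_univ] at hα hβ
  omega

end Count

end BoxProd

section Sweep

open SimpleGraph

variable {m n k s : ℕ} {G : SimpleGraph (Fin m)}

def sweep (m n : ℕ) : ℕ → Fin m → Fin m × Fin (n + 1) :=
  fun s a => (a, ⟨min s n, Nat.lt_succ_of_le (min_le_right s n)⟩)

lemma mem_protectedSet_sweep {v : Fin m × Fin (n + 1)} :
    v ∈ protectedSet (sweep m n) s ↔ v.2.val ≤ s := by
  constructor
  · rintro ⟨i, r, hr, rfl⟩
    exact (min_le_left r n).trans hr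
  · intro hv
    exact ⟨v.1, v.2.val, hv, Prod.ext rfl (Fin.ext (min_eq_left (Nat.lt_succ_iff.mp v.2.isLt)))⟩

lemma movesBefore_sweep_le (i : Fin m) (s : ℕ) : movesBefore (sweep m n) i s ≤ n := by
  calc movesBefore (sweep m n) i s ≤ (↑(Finset.range n) : Set ℕ).ncard := by
        refine Set.ncard_le_ncard fun r hr => Finset.mem_coe.mpr (Finset.mem_range.mpr ?_)
        by_contra! hnr
        exact hr.2 (Prod.ext rfl (Fin.ext (by simp [sweep]; omega)))
    _ = n := by rw [Set.ncard_coe_finset, Finset.card_range]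

lemma val_snd_le_of_adj {u v : Fin m × Fin (n + 1)} (h : (G □ pathGraph (n + 1)).Adj v u) :
    u.2.val ≤ v.2.val + 1 := by
  rcases boxProd_adj.mp h with ⟨-, h⟩ | ⟨h, -⟩
  · rw [h]; omega
  · rcases pathGraph_adj.mp h with h | h <;> omega

lemma sweep_firing_rule (hn : n ≤ k) (s : ℕ) (v : Fin m × Fin (n + 1)) :
    (Fires (G □ pathGraph (n + 1)) k (sweep m n) s v →
      (∀ i ∈ mobileOn k (sweep m n) s v,
        sweep m n (s + 1) i ∈ unprotNbrs (G □ pathGraph (n + 1)) (sweep m n) s v) ∧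
      (∀ u ∈ unprotNbrs (G □ pathGraph (n + 1)) (sweep m n) s v,
        ∃ i ∈ mobileOn k (sweep m n) s v, sweep m n (s + 1) i = u)) ∧
    (¬ Fires (G □ pathGraph (n + 1)) k (sweep m n) s v →
      ∀ i, sweep m n s i = v → sweep m n (s + 1) i = sweep m n s i) := by
  by_cases hsv : s < n ∧ v.2.val = s
  · obtain ⟨hs, hv⟩ := hsv
    have hnext : sweep m n (s + 1) v.1 = (v.1, ⟨s + 1, by omega⟩) :=
      Prod.ext rfl (Fin.ext (min_eq_left hs))
    have hU : unprotNbrs (G □ pathGraph (n + 1)) (sweep m n) s v = {sweep m n (s + 1) v.1} := by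
      ext w
      simp only [unprotNbrs, Set.mem_ofPred_eq, mem_protectedSet_sweep, not_le,
        Set.mem_singleton_iff, hnext]
      constructor
      · rintro ⟨hadj, hw⟩
        rcases boxProd_adj.mp hadj with ⟨-, h⟩ | ⟨h, h'⟩
        · exfalso; rw [← h] at hw; omega
        · exact Prod.ext h'.symm (Fin.ext (show w.2.val = s + 1 by
            rcases pathGraph_adj.mp h with h | h <;> omega))
      · rintro rfl
        exact ⟨boxProd_adj.mpr (.inr ⟨pathGraph_adj.mpr (.inl (by simp [hv])), rfl⟩),
          Nat.lt_succ_self s⟩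
    have hM : mobileOn k (sweep m n) s v = {v.1} := by
      ext i
      simp only [mobileOn, Set.mem_ofPred_eq, Set.mem_singleton_iff]
      refine ⟨fun hi => hi.1 ▸ rfl, fun hi => ⟨?_, ?_⟩⟩
      · exact Prod.ext (by simp [sweep, hi]) (Fin.ext (by simp [sweep, hv]; omega))
      · exact (movesBefore_le _ i s).trans_lt (hs.trans_le hn)
    simp only [Fires, hU, hM, Set.ncard_singleton, Set.singleton_nonempty, le_refl, and_self,
      not_true_eq_false, IsEmpty.forall_iff, Set.mem_singleton_iff, forall_eq, exists_eq_left,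
      implies_true]
  · refine ⟨fun hfire => ?_, fun _ i hi => ?_⟩
    · obtain ⟨w, hadj, hw⟩ := hfire.1
      obtain ⟨i, rfl, -⟩ := hfire.nonempty_mobileOn
      have := val_snd_le_of_adj hadj
      rw [mem_protectedSet_sweep] at hw
      have := w.2.isLt
      simp only [sweep] at hsv this
      omega
    · subst hi
      simp only [sweep] at hsv
      exact Prod.ext rfl (Fin.ext (by simp only [sweep]; omega))

theorem successful_sweep (G : SimpleGraph (Fin m)) (hn : n ≤ k) :
    Successful (G □ pathGraph (n + 1)) k (sweep m n) := by
  refine ⟨⟨fun i s => ?_, fun i s => (movesBefore_sweep_le i s).trans hn,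
    sweep_firing_rule hn⟩, fun v => ⟨v.1, v.2.val, ?_⟩⟩
  · by_cases hs : s < n
    · refine .inr (boxProd_adj.mpr (.inr ⟨pathGraph_adj.mpr (.inl ?_), rfl⟩))
      simp [sweep]; omega
    · exact .inl (Prod.ext rfl (Fin.ext (by simp [sweep]; omega)))
  · exact Prod.ext rfl (Fin.ext (min_eq_left (Nat.lt_succ_iff.mp v.2.isLt)))

end Sweep

end Deduction

open SimpleGraph in
theorem stmt_16_general (k m n : ℕ) (hm : 2 ≤ m) (hmn : m ≤ n)
    (hn : n ≤ k + 1) :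
    Deduction.deductionNumber (pathGraph m □ pathGraph n) k = m := by
  obtain ⟨m, rfl⟩ : ∃ m', m = m' + 1 := ⟨m - 1, by omega⟩
  obtain ⟨n, rfl⟩ : ∃ n', n = n' + 1 := ⟨n - 1, by omega⟩
  have hsweep := Deduction.successful_sweep (pathGraph (m + 1)) (k := k) (by omega : n ≤ k)
  refine le_antisymm (Nat.sInf_le ⟨_, hsweep⟩) (le_csInf ⟨_, _, hsweep⟩ ?_)
  rintro d ⟨t, ht⟩
  have : Nontrivial (Fin (n + 1)) := Fin.nontrivial_iff_two_le.mpr (by omega)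
  simpa using Deduction.card_le_of_successful_boxProd (pathGraph_connected m)
    (pathGraph_connected n) (by simpa using hmn) ht

open SimpleGraph in
/-- `d_k(P_m □ P_n) = m` when `2 ≤ m ≤ n ≤ k + 1`. -/
theorem stmt_16 (k m n : ℕ) (hk : 1 ≤ k) (hm : 2 ≤ m) (hmn : m ≤ n)
    (hn : n ≤ k + 1) :
    Deduction.deductionNumber (pathGraph m □ pathGraph n) k = m :=
  stmt_16_general k m n hm hmn hn
end
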